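/- arXiv:2403.12355 — 6 statements merged into one kernel-verified Lean document; each statement's English description precedes it below -/
import Mathlib

section
/- Let G be a finite nilpotent group of nilpotency class L generated by a symmetric set S ⊆ G. Then Diam_S(G₂) ≤ ∑_{i=2}^{L} Diam_S(G_i/G_{i+1}), where G₂ = [G,G] and (G_i) is the lower central series of G. -/
open scoped BigOperators
open scoped Classical

noncomputable section

/-- A subset of a group is symmetric if it is closed under taking inverses. -/
def SymmSet {G : Type*} [Group G] (S : Set G) : Prop := ∀ s : G, s ∈ S ↔ s⁻¹ ∈ S

/-- The word length of `g` with respect to `S`: the least `n` such that `g` is a product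
of a list of `n` elements of `S`. -/
def wordLength {G : Type*} [Group G] (S : Set G) (g : G) : ℕ :=
  sInf {n | ∃ l : List G, (∀ x ∈ l, x ∈ S) ∧ l.length = n ∧ l.prod = g}

/-- The diameter of a subset `H` of `G` in the Cayley graph of `G` w.r.t. `S`. -/
def setDiam {G : Type*} [Group G] (S H : Set G) : ℕ := sSup (wordLength S '' H)

/-- `Diam_S(H/N)`: the least `D` such that every `h ∈ H` can be written as `h = w * u` with
`u ∈ N` and `w` a product of at most `D` elements of `S`. -/
def quotDiam {G : Type*} [Group G] (S H N : Set G) : ℕ :=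
  sInf {D | ∀ h ∈ H, ∃ l : List G, (∀ x ∈ l, x ∈ S) ∧ l.length ≤ D ∧ ∃ u ∈ N, h = l.prod * u}

/-- `G` has rank `r`: `r` is the least `n` such that some set of `n` elements of `G`
together with their inverses generates `G`. -/
def HasRank (G : Type*) [Group G] (r : ℕ) : Prop :=
  IsLeast {n | ∃ T : Finset G, T.card = n ∧ Subgroup.closure ((T : Set G) ∪ (T : Set G)⁻¹) = ⊤} r

/-- `G` is nilpotent of nilpotency class exactly `L`; with the paper's indexing
`G_i := lowerCentralSeries G (i-1)`, this says `G_{L+1} = {1} ≠ G_L`. -/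
def NilpotencyClassEq (G : Type*) [Group G] (L : ℕ) : Prop :=
  (⊤ : Subgroup G).lowerCentralSeries L = ⊥ ∧ (⊤ : Subgroup G).lowerCentralSeries (L - 1) ≠ ⊥

/-- Transition matrix of the simple random walk on the Cayley graph `Cay(G,S)`. -/
def transMatrix {G : Type*} [Group G] [Fintype G] (S : Set G) : Matrix G G ℝ :=
  fun x y => if x⁻¹ * y ∈ S then ((S.ncard : ℝ))⁻¹ else 0

/-- Heat kernel `P_t = exp (t (K - I))` of the simple random walk on `Cay(G,S)`. -/
def heatKernel {G : Type*} [Group G] [Fintype G] (S : Set G) (t : ℝ) : Matrix G G ℝ :=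
  NormedSpace.exp (t • (transMatrix S - 1))

/-- Transition matrix of the projected walk on `G ⧸ N`. -/
def quotTransMatrix {G : Type*} [Group G] (S : Set G) (N : Subgroup G) [N.Normal] :
    Matrix (G ⧸ N) (G ⧸ N) ℝ :=
  fun C C' => (({s ∈ S | C * (QuotientGroup.mk s : G ⧸ N) = C'}).ncard : ℝ) / (S.ncard : ℝ)

/-- Heat kernel of the projected walk on `G ⧸ N`. -/
def quotHeatKernel {G : Type*} [Group G] [Fintype G] (S : Set G) (N : Subgroup G) [N.Normal]
    (t : ℝ) : Matrix (G ⧸ N) (G ⧸ N) ℝ :=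
  letI : Fintype (G ⧸ N) := Fintype.ofFinite _
  NormedSpace.exp (t • (quotTransMatrix S N - 1))

/-- `ε`-mixing time of the simple random walk on `Cay(G,S)` started at the identity. -/
def mixingTime {G : Type*} [Group G] [Fintype G] (S : Set G) (ε : ℝ) : ℝ :=
  sInf {t : ℝ | 0 ≤ t ∧ (∑ y : G, |heatKernel S t 1 y - (Fintype.card G : ℝ)⁻¹|) / 2 ≤ ε}

/-- `ε`-mixing time of the projected walk on `G ⧸ N` started at the identity coset. -/
def quotMixingTime {G : Type*} [Group G] [Fintype G] (S : Set G) (N : Subgroup G) [N.Normal]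
    (ε : ℝ) : ℝ :=
  letI : Fintype (G ⧸ N) := Fintype.ofFinite _
  sInf {t : ℝ | 0 ≤ t ∧
    (∑ C : G ⧸ N, |quotHeatKernel S N t 1 C - (Nat.card (G ⧸ N) : ℝ)⁻¹|) / 2 ≤ ε}

/-- Second-largest eigenvalue of a symmetric stochastic matrix, via the variational
characterization over mean-zero functions. -/
def secondEig {X : Type*} [Fintype X] (K : Matrix X X ℝ) : ℝ :=
  sSup {r : ℝ | ∃ f : X → ℝ, f ≠ 0 ∧ (∑ x, f x) = 0 ∧
    r = (∑ x, ∑ y, f x * K x y * f y) / (∑ x, (f x) ^ 2)}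

/-- Relaxation time `1/(1-λ)`. -/
def relaxTime {X : Type*} [Fintype X] (K : Matrix X X ℝ) : ℝ := 1 / (1 - secondEig K)

/-- Relaxation time of the projected walk on `G ⧸ N`. -/
def quotRelaxTime {G : Type*} [Group G] [Fintype G] (S : Set G) (N : Subgroup G) [N.Normal] : ℝ :=
  letI : Fintype (G ⧸ N) := Fintype.ofFinite _
  relaxTime (quotTransMatrix S N)

/-- The paper's commutator `[x,y] = x⁻¹ y⁻¹ x y`. -/
def pcomm {G : Type*} [Group G] (x y : G) : G := x⁻¹ * y⁻¹ * x * y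

/-- Iterated commutator `ρ(x, y₁, …, y_k) = [⋯[[x,y₁],y₂]⋯, y_k]`. -/
def rho {G : Type*} [Group G] (x : G) (l : List G) : G := l.foldl pcomm x

/-- Word length in `G` modulo `N`: the least `n` such that `g = w * u` with `u ∈ N` and
`w` a product of `n` elements of `S`. -/
def quotLength {G : Type*} [Group G] (S N : Set G) (g : G) : ℕ :=
  sInf {n | ∃ l : List G, (∀ x ∈ l, x ∈ S) ∧ l.length = n ∧ ∃ u ∈ N, g = l.prod * u}

/-! An element of `G_i` is a word of length at most `Diam_S(G_i/G_{i+1})` times an element of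
`G_{i+1}`, and `G_{L+1} = {1}`. Peeling off one layer at a time from `G_2` down to `G_{L+1}` and
concatenating the words writes every element of `G₂` as a word of length at most the sum of the
layer diameters. -/

section WordLength

variable {G : Type*} [Group G] {S : Set G}

theorem SymmSet.exists_list_prod_eq (hS : SymmSet S) (hgen : Subgroup.closure S = ⊤) (g : G) :
    ∃ l : List G, (∀ x ∈ l, x ∈ S) ∧ l.prod = g := by
  have hSS : S ∪ S⁻¹ = S := Set.union_eq_left.2 fun x hx => (hS x).2 hx
  have hg : g ∈ (Subgroup.closure S).toSubmonoid := by simp [hgen]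
  rw [Subgroup.closure_toSubmonoid, hSS] at hg
  exact Submonoid.exists_list_of_mem_closure hg

theorem wordLength_prod_le {l : List G} (hl : ∀ x ∈ l, x ∈ S) : wordLength S l.prod ≤ l.length :=
  Nat.sInf_le ⟨l, hl, rfl, rfl⟩

theorem setDiam_le {H : Set G} {D : ℕ} (hD : ∀ h ∈ H, wordLength S h ≤ D) : setDiam S H ≤ D :=
  csSup_le' <| by rintro _ ⟨h, hh, rfl⟩; exact hD h hh

/-- Finiteness makes the infimum in `quotDiam` attained (`sInf ∅ = 0` otherwise). -/
theorem exists_list_length_le_quotDiam {H N : Set G} (hH : H.Finite) (hN : (1 : G) ∈ N)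
    (hword : ∀ h ∈ H, ∃ l : List G, (∀ x ∈ l, x ∈ S) ∧ l.prod = h) :
    ∀ h ∈ H, ∃ l : List G, (∀ x ∈ l, x ∈ S) ∧ l.length ≤ quotDiam S H N ∧
      ∃ u ∈ N, h = l.prod * u := by
  have hne : {D | ∀ h ∈ H, ∃ l : List G, (∀ x ∈ l, x ∈ S) ∧ l.length ≤ D ∧
      ∃ u ∈ N, h = l.prod * u}.Nonempty := by
    choose! w hwS hw using hword
    refine ⟨hH.toFinset.sup fun h => (w h).length, fun h hh => ?_⟩
    exact ⟨w h, hwS h hh, Finset.le_sup (f := fun h => (w h).length) (hH.mem_toFinset.2 hh),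
      1, hN, by rw [hw h hh, mul_one]⟩
  exact Nat.sInf_mem hne

theorem exists_list_length_le_sum_quotDiam [Finite G] {N : ℕ → Subgroup G} {L : ℕ}
    (hword : ∀ g : G, ∃ l : List G, (∀ x ∈ l, x ∈ S) ∧ l.prod = g) (hL : N L = ⊥) {k : ℕ}
    (hk : k ≤ L) :
    ∀ g ∈ N k, ∃ l : List G, (∀ x ∈ l, x ∈ S) ∧
      l.length ≤ ∑ i ∈ Finset.Ico k L, quotDiam S (N i : Set G) (N (i + 1) : Set G) ∧
      l.prod = g := by
  induction hk using Nat.decreasingInduction with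
  | self =>
    intro g hg
    rw [hL, Subgroup.mem_bot] at hg
    exact ⟨[], by simp, by simp, by simp [hg]⟩
  | of_succ k hk ih =>
    intro g hg
    obtain ⟨w, hwS, hw, u, hu, rfl⟩ := exists_list_length_le_quotDiam (Set.toFinite _)
      (N (k + 1)).one_mem (fun h _ => hword h) g hg
    obtain ⟨w', hw'S, hw', rfl⟩ := ih u hu
    refine ⟨w ++ w', by simpa [or_imp, forall_and] using ⟨hwS, hw'S⟩, ?_, List.prod_append⟩
    rw [Finset.sum_eq_sum_Ico_succ_bot hk, List.length_append]
    exact Nat.add_le_add hw hw'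

end WordLength

/-- `Diam_S(G₂) ≤ ∑_{i=2}^{L} Diam_S(G_i/G_{i+1})`, where
`G_i = lowerCentralSeries G (i-1)`. -/
theorem diam_commutator_le_sum_quotient_diams (G : Type*) [Group G] [Fintype G] (L : ℕ)
    (hL : NilpotencyClassEq G L) (S : Set G) (hS : SymmSet S)
    (hgen : Subgroup.closure S = ⊤) :
    setDiam S (commutator G : Set G) ≤
      ∑ i ∈ Finset.Icc 2 L,
        quotDiam S ((⊤ : Subgroup G).lowerCentralSeries (i - 1) : Set G)
          ((⊤ : Subgroup G).lowerCentralSeries i : Set G) := by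
  set N := (⊤ : Subgroup G).lowerCentralSeries
  have hsum : ∑ i ∈ Finset.Icc 2 L, quotDiam S (N (i - 1) : Set G) (N i : Set G) =
      ∑ i ∈ Finset.Ico 1 L, quotDiam S (N i : Set G) (N (i + 1) : Set G) := by
    rw [← Finset.Ico_add_one_right_eq_Icc]
    exact (Finset.sum_Ico_add' (fun i => quotDiam S (N (i - 1) : Set G) (N i : Set G)) 1 L 1).symm
  have hL1 : 1 ≤ L := Nat.pos_of_ne_zero <| by rintro rfl; exact hL.2 hL.1
  rw [hsum]
  refine setDiam_le fun g hg => ?_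
  rw [← Subgroup.top_lowerCentralSeries_one] at hg
  obtain ⟨l, hlS, hlen, rfl⟩ :=
    exists_list_length_le_sum_quotDiam (hS.exists_list_prod_eq hgen) hL.1 hL1 g hg
  exact (wordLength_prod_le hlS).trans hlen

end
end

section
/- For every integer L ≥ 2 there exists a constant C > 0 (depending only on L) such that the following holds: for every finite nilpotent group G of nilpotency class L, every symmetric generating set S ⊆ G, and every R ⊆ S containing exactly one element of {s, s⁻¹} for each s ∈ S, if Diam_S(G_ab) ≥ C·|R|^{4L}, then Diam_S(G₂) ≤ C·Diam_S(G_ab)^{3/4}, where G₂ = [G,G] and Diam_S(G_ab) := Diam_S(G₁/G₂). -/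
open scoped BigOperators
open scoped Classical

noncomputable section

/-!
Modulo `G_{k+2}` the commutator map `G_k × G → G_{k+1}` is bimultiplicative with central
values, so since `S` generates `G`, every element of `G_{k+1}` is, modulo `G_{k+2}`, a product
`∏_{s ∈ R} [c_s, s]` with `c_s ∈ G_k`. Replacing each `c_s` by a word of length `W` that
represents it modulo `G_{k+1}` shows that `G_{k+1}` has diameter `≤ |R| (2W + 2)` modulo `G_{k+2}`.
On the first level one does better: for `|w| ≤ D`, `[w, s]` collects to `∏_{t ∈ R} [t, s]^{e_t}`
with `|e_t| ≤ D`, and `[t, s]^e = [t^a, s^a] [t^b, s]` with `a = ⌊√e⌋`, `b ≤ 2a` has length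
`O(√D)`. Summing over the levels gives `Diam_S(G₂) ≤ C_L |R|^L √D`, and the hypothesis says
`|R|^L ≤ D^{1/4}`.
-/

open Subgroup
open scoped Pointwise commutatorElement IsMulCommutative

section WordBall

variable {G H : Type*} [Group G] [Group H] {S : Set G} {m n : ℕ} {g h : G}

def wordBall (S : Set G) (n : ℕ) : Set G :=
  {g | ∃ l : List G, (∀ x ∈ l, x ∈ S) ∧ l.length ≤ n ∧ l.prod = g}

theorem one_mem_wordBall : (1 : G) ∈ wordBall S n :=
  ⟨[], by simp, by simp, rfl⟩

theorem mem_wordBall_one (hg : g ∈ S) : g ∈ wordBall S 1 :=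
  ⟨[g], by simpa, le_rfl, by simp⟩

theorem wordBall_mono : Monotone (wordBall S) :=
  fun _ _ hmn _ ⟨l, hlS, hl, hlg⟩ => ⟨l, hlS, hl.trans hmn, hlg⟩

theorem mul_mem_wordBall (hg : g ∈ wordBall S m) (hh : h ∈ wordBall S n) :
    g * h ∈ wordBall S (m + n) := by
  obtain ⟨l, hlS, hl, rfl⟩ := hg
  obtain ⟨l', hl'S, hl', rfl⟩ := hh
  exact ⟨l ++ l', by simp_all [or_imp], by simp; omega, List.prod_append⟩

theorem wordBall_mul_wordBall_subset : wordBall S m * wordBall S n ⊆ wordBall S (m + n) := by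
  rintro _ ⟨g, hg, h, hh, rfl⟩
  exact mul_mem_wordBall hg hh

theorem inv_mem_wordBall (hS : SymmSet S) (hg : g ∈ wordBall S n) : g⁻¹ ∈ wordBall S n := by
  obtain ⟨l, hlS, hl, rfl⟩ := hg
  refine ⟨(l.map (·⁻¹)).reverse, ?_, by simpa, (List.prod_inv_reverse l).symm⟩
  simp only [List.mem_reverse, List.mem_map]
  rintro _ ⟨x, hx, rfl⟩
  exact (hS x).mp (hlS x hx)

theorem pow_mem_wordBall (hg : g ∈ S) (n : ℕ) : g ^ n ∈ wordBall S n :=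
  ⟨List.replicate n g, by simp_all [List.mem_replicate], by simp, by simp⟩

theorem commutatorElement_mem_wordBall (hS : SymmSet S) (hg : g ∈ wordBall S m)
    (hh : h ∈ wordBall S n) : ⁅g, h⁆ ∈ wordBall S (2 * (m + n)) := by
  rw [commutatorElement_def, show 2 * (m + n) = m + n + m + n by ring]
  exact mul_mem_wordBall (mul_mem_wordBall (mul_mem_wordBall hg hh) (inv_mem_wordBall hS hg))
    (inv_mem_wordBall hS hh)

theorem map_prod_mem_wordBall {ι A : Type*} [CommMonoid A] (φ : A →* G) (t : Finset ι)
    (f : ι → A) (hf : ∀ i ∈ t, φ (f i) ∈ wordBall S n) :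
    φ (∏ i ∈ t, f i) ∈ wordBall S (t.card * n) := by
  induction t using Finset.induction_on with
  | empty => simpa using one_mem_wordBall
  | insert i t hi ih =>
    rw [Finset.prod_insert hi, map_mul, Finset.card_insert_of_notMem hi, add_mul, one_mul,
      add_comm]
    exact mul_mem_wordBall (hf i (t.mem_insert_self i))
      (ih fun j hj => hf j (Finset.mem_insert_of_mem hj))

theorem image_wordBall (f : G →* H) (S : Set G) (n : ℕ) :
    f '' wordBall S n = wordBall (f '' S) n := by
  ext x
  constructor
  · rintro ⟨_, ⟨l, hlS, hl, rfl⟩, rfl⟩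
    refine ⟨l.map f, ?_, by simpa, by simp [map_list_prod]⟩
    simpa using fun x hx => ⟨x, hlS x hx, rfl⟩
  · rintro ⟨l, hlS, hl, rfl⟩
    induction l generalizing n with
    | nil => exact ⟨1, one_mem_wordBall, by simp⟩
    | cons y l ih =>
      obtain ⟨x, hxS, rfl⟩ := hlS y List.mem_cons_self
      obtain ⟨g, hg, hgl⟩ := ih _ (fun z hz => hlS z (List.mem_cons_of_mem _ hz)) le_rfl
      refine ⟨x * g, wordBall_mono ?_ (mul_mem_wordBall (mem_wordBall_one hxS) hg), by simp [hgl]⟩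
      simpa [add_comm] using hl

theorem SymmSet.image (hS : SymmSet S) (f : G →* H) : SymmSet (f '' S) := by
  intro y
  constructor
  · rintro ⟨x, hx, rfl⟩; exact ⟨x⁻¹, (hS x).mp hx, map_inv f x⟩
  · rintro ⟨x, hx, hxy⟩; exact ⟨x⁻¹, (hS x).mp hx, by rw [map_inv, hxy, inv_inv]⟩

end WordBall

section Diameters

variable {G : Type*} [Group G] {S : Set G} {n : ℕ}

theorem wordLength_le_of_mem_wordBall {g : G} (hg : g ∈ wordBall S n) :
    wordLength S g ≤ n := by
  obtain ⟨l, hlS, hl, hlg⟩ := hg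
  refine (Nat.sInf_le ?_).trans hl
  exact ⟨l, hlS, rfl, hlg⟩

theorem setDiam_le_of_subset_wordBall {A : Set G} (h : A ⊆ wordBall S n) : setDiam S A ≤ n :=
  csSup_le' <| by
    rintro _ ⟨g, hg, rfl⟩
    exact wordLength_le_of_mem_wordBall (h hg)

theorem exists_forall_mem_wordBall [Finite G] (hS : SymmSet S) (hgen : closure S = ⊤) :
    ∃ n, ∀ g : G, g ∈ wordBall S n := by
  have hword (g : G) : ∃ l : List G, (∀ x ∈ l, x ∈ S) ∧ l.prod = g := by
    have hSS : S ∪ S⁻¹ = S := by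
      rw [Set.union_eq_left]; exact fun x hx => (hS x).mpr hx
    apply Submonoid.exists_list_of_mem_closure
    rw [← hSS, ← closure_toSubmonoid, hgen]
    exact mem_top g
  choose l hlS hlg using hword
  obtain ⟨n, hn⟩ := (Set.finite_range fun g => (l g).length).bddAbove
  refine ⟨n, fun g => ?_⟩
  exact ⟨l g, hlS g, hn (Set.mem_range_self g), hlg g⟩

theorem univ_subset_wordBall_quotDiam_mul [Finite G] (hS : SymmSet S) (hgen : closure S = ⊤)
    (N : Subgroup G) : Set.univ ⊆ wordBall S (quotDiam S Set.univ N) * (N : Set G) := by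
  obtain ⟨n, hn⟩ := exists_forall_mem_wordBall hS hgen
  have hne : {D | ∀ h ∈ (Set.univ : Set G), ∃ l : List G, (∀ x ∈ l, x ∈ S) ∧ l.length ≤ D ∧
      ∃ u ∈ (N : Set G), h = l.prod * u}.Nonempty := by
    refine ⟨n, fun g _ => ?_⟩
    obtain ⟨l, hlS, hl, rfl⟩ := hn g
    exact ⟨l, hlS, hl, 1, N.one_mem, (mul_one _).symm⟩
  intro g _
  obtain ⟨l, hlS, hl, u, hu, rfl⟩ := Nat.sInf_mem hne g trivial
  exact ⟨l.prod, ⟨l, hlS, hl, rfl⟩, u, hu, rfl⟩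

end Diameters

section CentralCommutator

variable {G : Type*} [Group G] {K : Subgroup G} {a b c : G}

theorem commutatorElement_mul_left_of_mem_center (h : ⁅b, c⁆ ∈ center G) :
    ⁅a * b, c⁆ = ⁅a, c⁆ * ⁅b, c⁆ := by
  rw [commutatorElement_mul_left_eq_conj_mul, mem_center_iff.mp h a, mul_inv_cancel_right,
    mem_center_iff.mp h]

theorem commutatorElement_mul_right_of_mem_center (h : ⁅a, c⁆ ∈ center G) :
    ⁅a, b * c⁆ = ⁅a, b⁆ * ⁅a, c⁆ := by
  rw [commutatorElement_mul_right_eq_mul_conj, mul_assoc ⁅a, b⁆, mem_center_iff.mp h b,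
    ← mul_assoc, mul_inv_cancel_right]

theorem commutatorElement_mul_left_eq_of_mem_center (hb : b ∈ center G) :
    ⁅a * b, c⁆ = ⁅a, c⁆ := by
  rw [commutatorElement_mul_left_eq_conj_mul,
    (show Commute b c from (mem_center_iff.mp hb c).symm).commutator_eq, mul_one,
    mul_inv_cancel, one_mul]

def commutatorLeftHom (hK : ⁅K, ⊤⁆ ≤ center G) (g : G) : K →* center G :=
  MonoidHom.mk' (fun k => ⟨⁅(k : G), g⁆, hK (commutator_mem_commutator k.2 (mem_top g))⟩)
    fun _ k => Subtype.ext <|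
      commutatorElement_mul_left_of_mem_center (hK (commutator_mem_commutator k.2 (mem_top g)))

def commutatorRightHom (hK : ⁅K, ⊤⁆ ≤ center G) (k : K) : G →* center G :=
  MonoidHom.mk' (fun g => ⟨⁅(k : G), g⁆, hK (commutator_mem_commutator k.2 (mem_top g))⟩)
    fun _ g => Subtype.ext <|
      commutatorElement_mul_right_of_mem_center (hK (commutator_mem_commutator k.2 (mem_top g)))

@[simp]
theorem coe_commutatorLeftHom (hK : ⁅K, ⊤⁆ ≤ center G) (g : G) (k : K) :
    (commutatorLeftHom hK g k : G) = ⁅(k : G), g⁆ := rfl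

theorem commutatorRightHom_apply (hK : ⁅K, ⊤⁆ ≤ center G) (k : K) (g : G) :
    commutatorRightHom hK k g = commutatorLeftHom hK g k := rfl

theorem exists_eq_prod_commutatorLeftHom (hK : ⁅K, ⊤⁆ ≤ center G) {T : Set G}
    (hT : closure T = ⊤) {R : Finset G} (hR : ∀ t ∈ T, t ∈ R ∨ t⁻¹ ∈ R) {v : G}
    (hv : v ∈ ⁅K, (⊤ : Subgroup G)⁆) :
    ∃ c : G → K, v = ((∏ s ∈ R, commutatorLeftHom hK s (c s) : center G) : G) := by
  -- The products `∏ s ∈ R, ⁅c s, s⁆` form the range of a homomorphism `Φ`; this subgroup contains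
  -- `⁅k, t⁆` for `t ∈ T`, hence every `⁅k, g⁆`, as `g ↦ ⁅k, g⁆` is a homomorphism too.
  let Φ : (G → K) →* center G :=
    ∏ s ∈ R, (commutatorLeftHom hK s).comp (Pi.evalMonoidHom _ s)
  have hΦ (c : G → K) : Φ c = ∏ s ∈ R, commutatorLeftHom hK s (c s) := by
    simp [Φ, MonoidHom.finsetProd_apply]
  suffices ⁅K, (⊤ : Subgroup G)⁆ ≤ Φ.range.map (center G).subtype by
    obtain ⟨_, ⟨c, rfl⟩, rfl⟩ := this hv
    exact ⟨c, by rw [hΦ]; rfl⟩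
  rw [commutator_le]
  intro k hk g _
  have hsingle (s : G) (hs : s ∈ R) : commutatorRightHom hK ⟨k, hk⟩ s ∈ Φ.range := by
    refine ⟨Pi.mulSingle s ⟨k, hk⟩, ?_⟩
    rw [hΦ, Finset.prod_eq_single_of_mem s hs fun t _ hts => by
      simp [Pi.mulSingle_eq_of_ne hts], Pi.mulSingle_eq_same, commutatorRightHom_apply]
  have hgen : closure T ≤ Φ.range.comap (commutatorRightHom hK ⟨k, hk⟩) := by
    rw [closure_le]
    intro t ht
    rcases hR t ht with h | h
    · exact hsingle t h
    · simpa using inv_mem (hsingle _ h)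
  exact ⟨_, hgen (hT ▸ mem_top g), rfl⟩

end CentralCommutator

section Collection

variable {G : Type*} [Group G] {S : Set G} {R : Finset G} {n : ℕ}

theorem exists_prod_zpow_of_mem_wordBall {A : Type*} [CommGroup A] (f : G →* A)
    (hR : ∀ s ∈ S, s ∈ R ∨ s⁻¹ ∈ R) {g : G} (hg : g ∈ wordBall S n) :
    ∃ e : G → ℤ, (∀ t, |e t| ≤ n) ∧ f g = ∏ t ∈ R, f t ^ e t := by
  obtain ⟨l, hlS, hl, rfl⟩ := hg
  suffices ∃ e : G → ℤ, (∀ t, |e t| ≤ l.length) ∧ f l.prod = ∏ t ∈ R, f t ^ e t by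
    obtain ⟨e, he, hfe⟩ := this
    exact ⟨e, fun t => (he t).trans (by exact_mod_cast hl), hfe⟩
  induction l with
  | nil => exact ⟨0, by simp, by simp⟩
  | cons x l ih =>
    obtain ⟨e, he, hfe⟩ := ih (fun y hy => hlS y (by simp [hy])) (by simp at hl; omega)
    have hstep (y : G) (hy : y ∈ R) (ε : ℤ) (hε : |ε| ≤ 1) (hxy : f x = f y ^ ε) :
        ∃ e' : G → ℤ, (∀ t, |e' t| ≤ (x :: l).length) ∧
          f (x :: l).prod = ∏ t ∈ R, f t ^ e' t := by
      refine ⟨e + Pi.single y ε, fun t => ?_, ?_⟩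
      · rw [Pi.add_apply, List.length_cons, Nat.cast_succ]
        refine (abs_add_le _ _).trans (add_le_add (he t) ?_)
        by_cases hty : t = y
        · subst hty; simpa using hε
        · simp [Pi.single_eq_of_ne hty]
      · simp_rw [List.prod_cons, map_mul, hfe, Pi.add_apply, zpow_add, Finset.prod_mul_distrib,
          hxy, mul_comm (f y ^ ε)]
        congr 1
        rw [Finset.prod_eq_single_of_mem y hy fun t _ hty => by simp [Pi.single_eq_of_ne hty],
          Pi.single_eq_same]
    rcases hR x (hlS x (by simp)) with hx | hx
    · exact hstep x hx 1 (by simp) (by simp)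
    · exact hstep x⁻¹ hx (-1) (by simp) (by simp)

end Collection

section ClassTwo

variable {G : Type*} [Group G] {S : Set G} {s t : G}

theorem commutatorElement_pow_left (h : commutator G ≤ center G) (a b : G) (m : ℕ) :
    ⁅a ^ m, b⁆ = ⁅a, b⁆ ^ m := by
  induction m with
  | zero => simp
  | succ m ih =>
    rw [pow_succ, commutatorElement_mul_left_of_mem_center
      (h (commutator_mem_commutator (mem_top a) (mem_top b))), ih, pow_succ]

theorem commutatorElement_pow_right (h : commutator G ≤ center G) (a b : G) (n : ℕ) :
    ⁅a, b ^ n⁆ = ⁅a, b⁆ ^ n := by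
  induction n with
  | zero => simp
  | succ n ih =>
    rw [pow_succ, commutatorElement_mul_right_of_mem_center
      (h (commutator_mem_commutator (mem_top a) (mem_top b))), ih, pow_succ]

theorem commutatorElement_pow_mem_wordBall (h : commutator G ≤ center G) (hS : SymmSet S)
    (ht : t ∈ S) (hs : s ∈ S) (n : ℕ) : ⁅t, s⁆ ^ n ∈ wordBall S (8 * Nat.sqrt n + 2) := by
  have hrem : n - Nat.sqrt n * Nat.sqrt n ≤ 2 * Nat.sqrt n := by
    have := Nat.sqrt_le_add n; omega
  set a := Nat.sqrt n
  have hsplit : ⁅t, s⁆ ^ n = ⁅t ^ a, s ^ a⁆ * ⁅t ^ (n - a * a), s⁆ := by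
    rw [commutatorElement_pow_left h, commutatorElement_pow_right h, ← pow_mul,
      commutatorElement_pow_left h, ← pow_add, Nat.add_sub_cancel' (Nat.sqrt_le n)]
  rw [hsplit]
  refine wordBall_mono ?_ (mul_mem_wordBall
    (commutatorElement_mem_wordBall hS (pow_mem_wordBall ht a) (pow_mem_wordBall hs a))
    (commutatorElement_mem_wordBall hS (pow_mem_wordBall ht _) (mem_wordBall_one hs)))
  omega

theorem commutatorElement_zpow_mem_wordBall (h : commutator G ≤ center G) (hS : SymmSet S)
    (ht : t ∈ S) (hs : s ∈ S) {D : ℕ} {e : ℤ} (he : |e| ≤ D) :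
    ⁅t, s⁆ ^ e ∈ wordBall S (8 * Nat.sqrt D + 2) := by
  obtain ⟨n, rfl | rfl⟩ := Int.eq_nat_or_neg e
  · have hnD : n ≤ D := by simpa using he
    rw [zpow_natCast]
    exact wordBall_mono (by have := Nat.sqrt_le_sqrt hnD; omega)
      (commutatorElement_pow_mem_wordBall h hS ht hs n)
  · have hnD : n ≤ D := by simpa using he
    rw [zpow_neg, zpow_natCast, ← inv_pow, commutatorElement_inv]
    exact wordBall_mono (by have := Nat.sqrt_le_sqrt hnD; omega)
      (commutatorElement_pow_mem_wordBall h hS hs ht n)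

end ClassTwo

section Step

variable {G : Type*} [Group G]

structure IsGeneratingHalf (S : Set G) (R : Finset G) : Prop where
  symmSet : SymmSet S
  closure_eq : closure S = ⊤
  subset : (R : Set G) ⊆ S
  mem_or_inv_mem : ∀ s ∈ S, s ∈ R ∨ s⁻¹ ∈ R

variable {S : Set G} {R : Finset G}

theorem IsGeneratingHalf.commutator_subset_wordBall (hSR : IsGeneratingHalf S R)
    {K : Subgroup G} (hK : ⁅K, ⊤⁆ ≤ center G) {W : ℕ}
    (hW : (K : Set G) ⊆ wordBall S W * ⁅K, (⊤ : Subgroup G)⁆) :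
    ((⁅K, ⊤⁆ : Subgroup G) : Set G) ⊆ wordBall S (R.card * (2 * (W + 1))) := by
  intro v hv
  obtain ⟨c, rfl⟩ := exists_eq_prod_commutatorLeftHom hK hSR.closure_eq hSR.mem_or_inv_mem hv
  refine map_prod_mem_wordBall (center G).subtype R _ fun s hs => ?_
  obtain ⟨w, hw, u, hu, hwu⟩ := hW (c s).2
  rw [coe_subtype, coe_commutatorLeftHom, ← hwu,
    commutatorElement_mul_left_eq_of_mem_center (hK hu)]
  exact commutatorElement_mem_wordBall hSR.symmSet hw (mem_wordBall_one (hSR.subset hs))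

theorem IsGeneratingHalf.commutator_subset_wordBall_sqrt (hSR : IsGeneratingHalf S R)
    (h : commutator G ≤ center G) {D : ℕ}
    (hD : Set.univ ⊆ wordBall S D * (commutator G : Set G)) :
    (commutator G : Set G) ⊆ wordBall S (R.card * (R.card * (8 * Nat.sqrt D + 2))) := by
  have hK : ⁅(⊤ : Subgroup G), ⊤⁆ ≤ center G := h
  intro v hv
  obtain ⟨c, rfl⟩ := exists_eq_prod_commutatorLeftHom hK hSR.closure_eq hSR.mem_or_inv_mem hv
  refine map_prod_mem_wordBall (center G).subtype R _ fun s hs => ?_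
  obtain ⟨w, hw, u, hu, hwu⟩ := hD (Set.mem_univ (c s : G))
  rw [coe_subtype, coe_commutatorLeftHom, ← hwu,
    commutatorElement_mul_left_eq_of_mem_center (h hu)]
  let f : G →* center G := (commutatorLeftHom hK s).comp topEquiv.symm.toMonoidHom
  obtain ⟨e, he, hfw⟩ := exists_prod_zpow_of_mem_wordBall f hSR.mem_or_inv_mem hw
  rw [show ⁅w, s⁆ = (center G).subtype (f w) from rfl, hfw]
  refine map_prod_mem_wordBall (center G).subtype R _ fun t ht => ?_
  exact commutatorElement_zpow_mem_wordBall h hSR.symmSet (hSR.subset ht) (hSR.subset hs) (he t)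

theorem IsGeneratingHalf.one_le_card [Nontrivial G] (hSR : IsGeneratingHalf S R) :
    1 ≤ R.card := by
  obtain ⟨s, hs⟩ : S.Nonempty := by
    rw [Set.nonempty_iff_ne_empty]
    rintro rfl
    exact bot_ne_top (closure_empty (G := G) ▸ hSR.closure_eq)
  rcases hSR.mem_or_inv_mem s hs with h | h <;> exact Finset.card_pos.mpr ⟨_, h⟩

end Step

section Quotient

variable {G Q : Type*} [Group G] [Group Q] {S : Set G} {R : Finset G}

theorem IsGeneratingHalf.map [DecidableEq Q] (hSR : IsGeneratingHalf S R) {f : G →* Q}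
    (hf : Function.Surjective f) : IsGeneratingHalf (f '' S) (R.image f) where
  symmSet := hSR.symmSet.image f
  closure_eq := by rw [← MonoidHom.map_closure, hSR.closure_eq, map_top_of_surjective f hf]
  subset := by rw [Finset.coe_image]; exact Set.image_mono hSR.subset
  mem_or_inv_mem := by
    rintro _ ⟨s, hs, rfl⟩
    rcases hSR.mem_or_inv_mem s hs with h | h
    · exact Or.inl (Finset.mem_image_of_mem f h)
    · exact Or.inr (map_inv f s ▸ Finset.mem_image_of_mem f h)

theorem map_top_lowerCentralSeries_of_surjective {f : G →* Q} (hf : Function.Surjective f)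
    (n : ℕ) : ((⊤ : Subgroup G).lowerCentralSeries n).map f =
      (⊤ : Subgroup Q).lowerCentralSeries n := by
  rw [map_lowerCentralSeries, map_top_of_surjective f hf]

theorem image_lowerCentralSeries_of_surjective {f : G →* Q} (hf : Function.Surjective f)
    (n : ℕ) : f '' ((⊤ : Subgroup G).lowerCentralSeries n : Set G) =
      (⊤ : Subgroup Q).lowerCentralSeries n := by
  rw [← coe_map, map_top_lowerCentralSeries_of_surjective hf]

theorem lowerCentralSeries_quotient_le_center (n : ℕ) :
    (⊤ : Subgroup (G ⧸ (⊤ : Subgroup G).lowerCentralSeries (n + 1))).lowerCentralSeries n ≤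
      center _ := by
  rw [← commutator_top_right_eq_bot_iff_le_center, ← Subgroup.lowerCentralSeries_succ,
    ← map_top_lowerCentralSeries_of_surjective (QuotientGroup.mk'_surjective _),
    QuotientGroup.map_mk'_self]

theorem subset_mul_of_image_mk_subset (N : Subgroup G) [N.Normal] {A B : Set G}
    (h : QuotientGroup.mk' N '' A ⊆ QuotientGroup.mk' N '' B) : A ⊆ B * N := fun x hx => by
  rw [← QuotientGroup.preimage_image_mk_eq_mul]
  exact h ⟨x, hx, rfl⟩

theorem IsGeneratingHalf.lowerCentralSeries_succ_subset_wordBall_mul (hSR : IsGeneratingHalf S R)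
    (j W : ℕ) (hW : ((⊤ : Subgroup G).lowerCentralSeries j : Set G) ⊆
      wordBall S W * (⊤ : Subgroup G).lowerCentralSeries (j + 1)) :
    ((⊤ : Subgroup G).lowerCentralSeries (j + 1) : Set G) ⊆
      wordBall S (R.card * (2 * (W + 1))) * (⊤ : Subgroup G).lowerCentralSeries (j + 2) := by
  have hπ := QuotientGroup.mk'_surjective ((⊤ : Subgroup G).lowerCentralSeries (j + 2))
  apply subset_mul_of_image_mk_subset
  rw [image_lowerCentralSeries_of_surjective hπ, image_wordBall]
  refine ((hSR.map hπ).commutator_subset_wordBall (lowerCentralSeries_quotient_le_center _)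
    ?_).trans (wordBall_mono (Nat.mul_le_mul_right _ Finset.card_image_le))
  rw [← Subgroup.lowerCentralSeries_succ, ← image_lowerCentralSeries_of_surjective hπ,
    ← image_lowerCentralSeries_of_surjective hπ, ← image_wordBall, ← Set.image_mul]
  exact Set.image_mono hW

theorem IsGeneratingHalf.commutator_subset_wordBall_sqrt_mul (hSR : IsGeneratingHalf S R)
    {D : ℕ} (hD : Set.univ ⊆ wordBall S D * (commutator G : Set G)) :
    (commutator G : Set G) ⊆
      wordBall S (R.card * (R.card * (8 * Nat.sqrt D + 2))) *
        (⊤ : Subgroup G).lowerCentralSeries 2 := by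
  have hπ := QuotientGroup.mk'_surjective ((⊤ : Subgroup G).lowerCentralSeries 2)
  apply subset_mul_of_image_mk_subset
  rw [← top_lowerCentralSeries_one, image_lowerCentralSeries_of_surjective hπ,
    top_lowerCentralSeries_one, image_wordBall]
  refine ((hSR.map hπ).commutator_subset_wordBall_sqrt (D := D)
    (lowerCentralSeries_quotient_le_center 1) ?_).trans (wordBall_mono ?_)
  · rw [← top_lowerCentralSeries_one, ← image_lowerCentralSeries_of_surjective hπ,
      top_lowerCentralSeries_one, ← Set.image_univ_of_surjective hπ, ← image_wordBall,
      ← Set.image_mul]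
    exact Set.image_mono hD
  · exact Nat.mul_le_mul Finset.card_image_le (Nat.mul_le_mul_right _ Finset.card_image_le)

end Quotient

section Chain

variable {G : Type*} [Group G] {S : Set G} {R : Finset G}

theorem subset_wordBall_mul_of_forall_mem_Ico (N : ℕ → Set G) (W : ℕ → ℕ) {a b : ℕ}
    (hab : a ≤ b) (h : ∀ i ∈ Finset.Ico a b, N i ⊆ wordBall S (W i) * N (i + 1)) :
    N a ⊆ wordBall S (∑ i ∈ Finset.Ico a b, W i) * N b := by
  induction b, hab using Nat.le_induction with
  | base => exact fun x hx => ⟨1, one_mem_wordBall, x, hx, one_mul x⟩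
  | succ b hab ih =>
    rw [Finset.sum_Ico_succ_top hab]
    calc N a ⊆ wordBall S (∑ i ∈ Finset.Ico a b, W i) * N b :=
          ih fun i hi => h i (Finset.Ico_subset_Ico_right b.le_succ hi)
      _ ⊆ wordBall S (∑ i ∈ Finset.Ico a b, W i) * (wordBall S (W b) * N (b + 1)) :=
          Set.mul_subset_mul_left (h b (Finset.mem_Ico.mpr ⟨hab, b.lt_succ_self⟩))
      _ ⊆ wordBall S (∑ i ∈ Finset.Ico a b, W i + W b) * N (b + 1) := by
          rw [← mul_assoc]
          exact Set.mul_subset_mul_right wordBall_mul_wordBall_subset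

theorem IsGeneratingHalf.lowerCentralSeries_subset_wordBall_mul (hSR : IsGeneratingHalf S R)
    (hr : 1 ≤ R.card) {D : ℕ} (hD : Set.univ ⊆ wordBall S D * (commutator G : Set G)) {j : ℕ}
    (hj : 1 ≤ j) : ((⊤ : Subgroup G).lowerCentralSeries j : Set G) ⊆
      wordBall S ((3 * R.card) ^ (j + 1) * (8 * Nat.sqrt D + 2)) *
        (⊤ : Subgroup G).lowerCentralSeries (j + 1) := by
  induction j, hj using Nat.le_induction with
  | base =>
    refine (hSR.commutator_subset_wordBall_sqrt_mul hD).trans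
      (Set.mul_subset_mul_right (wordBall_mono ?_))
    rw [show (3 * R.card) ^ (1 + 1) * (8 * Nat.sqrt D + 2) =
      9 * (R.card * (R.card * (8 * Nat.sqrt D + 2))) by ring]
    exact Nat.le_mul_of_pos_left _ (by norm_num)
  | succ j hj ih =>
    refine (hSR.lowerCentralSeries_succ_subset_wordBall_mul j _ ih).trans
      (Set.mul_subset_mul_right (wordBall_mono ?_))
    set X := (3 * R.card) ^ (j + 1) * (8 * Nat.sqrt D + 2) with hXdef
    have hX : 2 ≤ X := le_mul_of_one_le_of_le (Nat.one_le_pow _ _ (by omega)) (by omega)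
    rw [show (3 * R.card) ^ (j + 1 + 1) * (8 * Nat.sqrt D + 2) = 3 * R.card * X by
      rw [hXdef]; ring]
    nlinarith [Nat.mul_le_mul_left R.card hX]

theorem IsGeneratingHalf.setDiam_commutator_le (hSR : IsGeneratingHalf S R) (hr : 1 ≤ R.card)
    {L : ℕ} (hL : (⊤ : Subgroup G).lowerCentralSeries L = ⊥) (hL1 : 1 ≤ L) {D : ℕ} (hD1 : 1 ≤ D)
    (hD : Set.univ ⊆ wordBall S D * (commutator G : Set G)) :
    setDiam S (commutator G : Set G) ≤ 10 * L * 3 ^ L * R.card ^ L * Nat.sqrt D := by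
  have hchain := subset_wordBall_mul_of_forall_mem_Ico
    (fun i => ((⊤ : Subgroup G).lowerCentralSeries i : Set G))
    (fun i => (3 * R.card) ^ (i + 1) * (8 * Nat.sqrt D + 2)) hL1 fun i hi =>
    hSR.lowerCentralSeries_subset_wordBall_mul hr hD (Finset.mem_Ico.mp hi).1
  rw [hL, coe_bot, Set.singleton_one, mul_one] at hchain
  refine setDiam_le_of_subset_wordBall (hchain.trans (wordBall_mono ?_))
  have hm : 1 ≤ Nat.sqrt D := Nat.sqrt_pos.mpr hD1
  calc ∑ i ∈ Finset.Ico 1 L, (3 * R.card) ^ (i + 1) * (8 * Nat.sqrt D + 2)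
      ≤ ∑ _i ∈ Finset.Ico 1 L, (3 * R.card) ^ L * (10 * Nat.sqrt D) :=
        Finset.sum_le_sum fun i hi => Nat.mul_le_mul
          (Nat.pow_le_pow_right (by omega) (by have := (Finset.mem_Ico.mp hi).2; omega))
          (by omega)
    _ ≤ L * ((3 * R.card) ^ L * (10 * Nat.sqrt D)) := by
        rw [Finset.sum_const, Nat.card_Ico, smul_eq_mul]
        exact Nat.mul_le_mul_right _ (Nat.sub_le L 1)
    _ = 10 * L * 3 ^ L * R.card ^ L * Nat.sqrt D := by ring

end Chain

theorem mul_mul_sqrt_le_mul_rpow {C x D : ℝ} (hC : 1 ≤ C) (hx : 0 ≤ x) (h : C * x ^ 4 ≤ D) :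
    C * x * √D ≤ C * D ^ (3 / 4 : ℝ) := by
  have hD : 0 ≤ D := le_trans (by positivity) h
  have hxD : x ≤ D ^ (4⁻¹ : ℝ) := by
    rw [← Real.pow_rpow_inv_natCast hx (by norm_num : (4 : ℕ) ≠ 0)]
    exact Real.rpow_le_rpow (by positivity) (by nlinarith [pow_nonneg hx 4]) (by norm_num)
  calc C * x * √D ≤ C * D ^ (4⁻¹ : ℝ) * D ^ (2⁻¹ : ℝ) := by
        rw [Real.sqrt_eq_rpow, one_div]
        gcongr
    _ = C * D ^ (3 / 4 : ℝ) := by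
        rw [mul_assoc, ← Real.rpow_add' hD (by norm_num)]
        norm_num

theorem nontrivial_of_lowerCentralSeries_ne_bot {G : Type*} [Group G] {n : ℕ}
    (h : (⊤ : Subgroup G).lowerCentralSeries n ≠ ⊥) : Nontrivial G := by
  by_contra hG
  rw [not_nontrivial_iff_subsingleton] at hG
  exact h (Subsingleton.elim _ _)

theorem mem_or_inv_mem_of_ncard_eq_one {G : Type*} [Group G] {R : Set G} {s : G}
    (h : (({s, s⁻¹} : Set G) ∩ R).ncard = 1) : s ∈ R ∨ s⁻¹ ∈ R := by
  obtain ⟨x, hx, hxR⟩ := Set.nonempty_of_ncard_ne_zero (h ▸ one_ne_zero)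
  rcases hx with rfl | rfl
  exacts [Or.inl hxR, Or.inr hxR]

theorem isGeneratingHalf_toFinset {G : Type*} [Group G] [Fintype G] {S R : Set G}
    (hS : SymmSet S) (hgen : closure S = ⊤) (hRS : R ⊆ S) (hR : ∀ s ∈ S, s ∈ R ∨ s⁻¹ ∈ R) :
    IsGeneratingHalf S R.toFinset :=
  ⟨hS, hgen, by simpa using hRS, by simpa using hR⟩

/-- Corollary `diam_comparison`: for each `L ≥ 2` there is a constant `C > 0`
such that whenever `Diam_S(G_ab) ≥ C |R|^{4L}`, one has `Diam_S(G₂) ≤ C · Diam_S(G_ab)^{3/4}`. -/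
theorem diam_commutator_le_diam_ab_pow (L : ℕ) (hL2 : 2 ≤ L) :
    ∃ C : ℝ, 0 < C ∧
      ∀ (G : Type) [Group G] [Fintype G],
        NilpotencyClassEq G L →
        ∀ S R : Set G, SymmSet S → Subgroup.closure S = ⊤ → R ⊆ S →
          (∀ s ∈ S, (({s, s⁻¹} : Set G) ∩ R).ncard = 1) →
          C * (R.ncard : ℝ) ^ (4 * L) ≤
            (quotDiam S (Set.univ : Set G) (commutator G : Set G) : ℝ) →
          (setDiam S (commutator G : Set G) : ℝ) ≤
            C * (quotDiam S (Set.univ : Set G) (commutator G : Set G) : ℝ) ^ ((3 : ℝ) / 4) := by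
  refine ⟨10 * L * 3 ^ L, by positivity, fun G _ _ hnil S R hS hgen hRS hR hDiam => ?_⟩
  have : Nontrivial G := nontrivial_of_lowerCentralSeries_ne_bot hnil.2
  have hSR := isGeneratingHalf_toFinset hS hgen hRS fun s hs =>
    mem_or_inv_mem_of_ncard_eq_one (hR s hs)
  have hr : 1 ≤ R.ncard := by rw [Set.ncard_eq_toFinset_card']; exact hSR.one_le_card
  have hC : (1 : ℝ) ≤ 10 * L * 3 ^ L :=
    one_le_mul_of_one_le_of_one_le (by norm_cast; omega) (one_le_pow₀ (by norm_num))
  have hD : 1 ≤ quotDiam S Set.univ (commutator G : Set G) := by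
    have : (1 : ℝ) ≤ 10 * L * 3 ^ L * (R.ncard : ℝ) ^ (4 * L) :=
      one_le_mul_of_one_le_of_one_le hC (one_le_pow₀ (by exact_mod_cast hr))
    exact_mod_cast this.trans hDiam
  have hdiam := hSR.setDiam_commutator_le hSR.one_le_card hnil.1 (by omega) hD
    (univ_subset_wordBall_quotDiam_mul hS hgen _)
  rw [← Set.ncard_eq_toFinset_card'] at hdiam
  calc (setDiam S (commutator G : Set G) : ℝ)
      ≤ 10 * L * 3 ^ L * (R.ncard : ℝ) ^ L * Nat.sqrt (quotDiam S Set.univ (commutator G)) := by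
        exact_mod_cast hdiam
    _ ≤ 10 * L * 3 ^ L * (R.ncard : ℝ) ^ L * √(quotDiam S Set.univ (commutator G) : ℝ) := by
        gcongr; exact Real.nat_sqrt_le_real_sqrt
    _ ≤ _ := mul_mul_sqrt_le_mul_rpow hC (by positivity) (by rwa [← pow_mul, mul_comm L 4])
end
end

section
/- Let G be a group and S ⊆ G a symmetric set. For every integer i ≥ 2, every integer j with 2 ≤ j ≤ i, every n ∈ ℕ, and all x₁, …, x_i ∈ S, the element ρ(x₁^n, x₂^n, …, x_j^n, x_{j+1}, …, x_i) is the product of some list of at most 2^{i+2}·n elements of S. -/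
open scoped BigOperators
open scoped Classical

noncomputable section

/-! Since `S` is symmetric, `[g, h]` is a product of at most `2a + 2b` elements of `S` when `g`
and `h` are products of at most `a` and `b` of them. Feeding entries of length at most `m` into
the iterated commutator turns a length bound `L` into `2L + 2m`, so `L + 2m` doubles at each step;
starting from `x₁ⁿ` with `L = n` and entries of length at most `n`, this gives
`2^(i-1) · 3n ≤ 2^(i+2) n` (for `n = 0` the element is `ρ(1, …) = 1`). -/

theorem rho_cons {G : Type*} [Group G] (g y : G) (ys : List G) :
    rho g (y :: ys) = rho (pcomm g y) ys :=
  rfl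

theorem rho_one {G : Type*} [Group G] (ys : List G) : rho (1 : G) ys = 1 := by
  induction ys with
  | nil => rfl
  | cons y ys ih => simpa [rho_cons, pcomm] using ih

section WordLE

variable {G : Type*} [Group G] {S : Set G}

def WordLE (S : Set G) (m : ℕ) (g : G) : Prop :=
  ∃ l : List G, (∀ y ∈ l, y ∈ S) ∧ l.length ≤ m ∧ l.prod = g

theorem wordLE_one (m : ℕ) : WordLE S m 1 :=
  ⟨[], by simp, by simp, rfl⟩

theorem wordLE_of_mem {g : G} (hg : g ∈ S) : WordLE S 1 g :=
  ⟨[g], by simpa using hg, by simp, by simp⟩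

theorem WordLE.mono {m m' : ℕ} {g : G} (h : WordLE S m g) (hm : m ≤ m') : WordLE S m' g :=
  let ⟨l, hS, hl, hprod⟩ := h
  ⟨l, hS, hl.trans hm, hprod⟩

theorem WordLE.mul {a b : ℕ} {g h : G} (hg : WordLE S a g) (hh : WordLE S b h) :
    WordLE S (a + b) (g * h) := by
  obtain ⟨lg, hSg, hlg, rfl⟩ := hg
  obtain ⟨lh, hSh, hlh, rfl⟩ := hh
  refine ⟨lg ++ lh, ?_, ?_, List.prod_append⟩
  · simpa only [List.mem_append, or_imp, forall_and] using ⟨hSg, hSh⟩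
  · rw [List.length_append]
    omega

theorem WordLE.inv (hS : SymmSet S) {a : ℕ} {g : G} (hg : WordLE S a g) : WordLE S a g⁻¹ := by
  obtain ⟨l, hSl, hl, rfl⟩ := hg
  refine ⟨(l.map fun y => y⁻¹).reverse, ?_, by simpa using hl, (List.prod_inv_reverse l).symm⟩
  intro y hy
  rw [List.mem_reverse, List.mem_map_of_involutive inv_involutive] at hy
  exact (hS y).mpr (hSl _ hy)

theorem WordLE.pow {a : ℕ} {g : G} (hg : WordLE S a g) (n : ℕ) : WordLE S (n * a) (g ^ n) := by
  induction n with
  | zero => simpa using wordLE_one 0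
  | succ n ih => simpa [pow_succ, Nat.succ_mul] using ih.mul hg

theorem WordLE.pcomm (hS : SymmSet S) {a b : ℕ} {g h : G} (hg : WordLE S a g)
    (hh : WordLE S b h) : WordLE S (2 * a + 2 * b) (pcomm g h) := by
  have := (((hg.inv hS).mul (hh.inv hS)).mul hg).mul hh
  exact this.mono (by omega)

theorem WordLE.rho (hS : SymmSet S) {a m : ℕ} {g : G} {ys : List G} (hg : WordLE S a g)
    (hys : ∀ y ∈ ys, WordLE S m y) : WordLE S (2 ^ ys.length * (a + 2 * m)) (rho g ys) := by
  induction ys generalizing a g with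
  | nil => exact hg.mono (by simp)
  | cons y ys ih =>
    have hstep := hg.pcomm hS (hys y List.mem_cons_self)
    have := ih hstep fun z hz => hys z (List.mem_cons_of_mem y hz)
    rw [rho_cons, List.length_cons, pow_succ, mul_assoc]
    convert this using 2
    ring

end WordLE

theorem rho_powers_word_length_general (G : Type*) [Group G] (S : Set G) (hS : SymmSet S)
    (i j n : ℕ) (hi : 2 ≤ i)
    (x : ℕ → G) (hx : ∀ k < i, x k ∈ S) :
    ∃ l : List G, (∀ y ∈ l, y ∈ S) ∧ l.length ≤ 2 ^ (i + 2) * n ∧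
      l.prod = rho ((x 0) ^ n)
        (List.ofFn (fun k : Fin (i - 1) =>
          if (k : ℕ) + 1 < j then (x ((k : ℕ) + 1)) ^ n else x ((k : ℕ) + 1))) := by
  show WordLE S (2 ^ (i + 2) * n) _
  rcases Nat.eq_zero_or_pos n with rfl | hn
  · rw [pow_zero, rho_one]
    exact wordLE_one _
  have hx0 : WordLE S n (x 0 ^ n) := by simpa using (wordLE_of_mem (hx 0 (by omega))).pow n
  refine (hx0.rho hS (m := n) ?entries).mono ?length
  case entries =>
    rw [List.forall_mem_ofFn_iff]
    intro k
    have hxk := wordLE_of_mem (hx (k + 1) (by omega))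
    split_ifs
    · simpa using hxk.pow n
    · exact hxk.mono hn
  case length =>
    rw [List.length_ofFn]
    calc 2 ^ (i - 1) * (n + 2 * n) ≤ 2 ^ i * (4 * n) := by gcongr <;> omega
      _ = 2 ^ (i + 2) * n := by ring

/-- inequality `e:bilinearity3`: `ρ(x₁^n, …, x_j^n, x_{j+1}, …, x_i)` is a
product of at most `2^{i+2} n` elements of `S`. -/
theorem rho_powers_word_length (G : Type*) [Group G] (S : Set G) (hS : SymmSet S)
    (i j n : ℕ) (hi : 2 ≤ i) (hj2 : 2 ≤ j) (hji : j ≤ i)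
    (x : ℕ → G) (hx : ∀ k < i, x k ∈ S) :
    ∃ l : List G, (∀ y ∈ l, y ∈ S) ∧ l.length ≤ 2 ^ (i + 2) * n ∧
      l.prod = rho ((x 0) ^ n)
        (List.ofFn (fun k : Fin (i - 1) =>
          if (k : ℕ) + 1 < j then (x ((k : ℕ) + 1)) ^ n else x ((k : ℕ) + 1))) :=
  rho_powers_word_length_general G S hS i j n hi x hx

end
end

section
/- Let G be a finite nilpotent group generated by a symmetric set S ⊆ G, let R ⊆ S contain exactly one element of {s, s⁻¹} for each s ∈ S, and set D := Diam_S(G_ab). Then for every i ≥ 1 and every g ∈ G_i there exist functions ℓ_τ : S → ℕ, indexed by tuples τ = (x₂, …, x_i) ∈ R^{i−1}, such that for every τ one has ∑_{s ∈ S} ℓ_τ(s) ≤ D and ℓ_τ(s)·ℓ_τ(s⁻¹) = 0 whenever s ≠ s⁻¹, and such that in the abelian group G_i/G_{i+1} the coset g·G_{i+1} equals the product over all τ = (x₂,…,x_i) ∈ R^{i−1} and all s ∈ S of the cosets ρ(s^{ℓ_τ(s)}, x₂, …, x_i)·G_{i+1} (for i = 1 the tuple τ is empty and ρ(s^{ℓ(s)})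 := s^{ℓ(s)}). -/
open scoped BigOperators
open scoped Classical

noncomputable section

/-!
Modulo `G_{n+3}` the commutator `[a, x]` with `a ∈ G_{n+1}` is central and multiplicative in
each argument, so it is a bimultiplicative pairing `G_{n+1}/G_{n+2} × G → G_{n+2}/G_{n+3}`.
As `G_{n+2}` is generated by such commutators and `S` generates `G`, every `g ∈ G_{n+2}` is
`∏_{x ∈ R} [c_x, x]` modulo `G_{n+3}` (a generator `x ∉ R` has `x⁻¹ ∈ R` and contributes an
inverse). Expanding each `c_x` by induction and pushing the expansion through the pairing gives
the expansion of `g`, with the tuple `τ` extended by `x`. At the bottom, `G_ab` is commutative,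
so a word of length at most `D` representing `g` collapses to `∏ s ^ ℓ(s)`, where `ℓ(s)` counts
the occurrences of `s` left after cancelling them against those of `s⁻¹`.
-/

open Subgroup QuotientGroup
open scoped commutatorElement IsMulCommutative

section LowerCentralSeries

variable {G : Type*} [Group G]

theorem pcomm_eq_commutatorElement (x y : G) : pcomm x y = ⁅x⁻¹, y⁻¹⁆ := by
  simp [pcomm, commutatorElement_def]

theorem pcomm_mem_lowerCentralSeries_succ {n : ℕ} {a : G}
    (ha : a ∈ (⊤ : Subgroup G).lowerCentralSeries n) (x : G) :
    pcomm a x ∈ (⊤ : Subgroup G).lowerCentralSeries (n + 1) := by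
  rw [pcomm_eq_commutatorElement]
  exact commutator_mem_commutator (inv_mem ha) (mem_top _)

theorem rho_mem_lowerCentralSeries {n : ℕ} {a : G}
    (ha : a ∈ (⊤ : Subgroup G).lowerCentralSeries n) (l : List G) :
    rho a l ∈ (⊤ : Subgroup G).lowerCentralSeries (n + l.length) := by
  induction l generalizing a n with
  | nil => exact ha
  | cons y l ih =>
    have := ih (pcomm_mem_lowerCentralSeries_succ ha y)
    rwa [Nat.add_right_comm] at this

theorem rho_ofFn_mem_lowerCentralSeries {n : ℕ} (x : G) (τ : Fin n → G) :
    rho x (List.ofFn τ) ∈ (⊤ : Subgroup G).lowerCentralSeries n := by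
  simpa using rho_mem_lowerCentralSeries (n := 0) (mem_top x) (List.ofFn τ)

theorem rho_ofFn_snoc {n : ℕ} (x : G) (τ : Fin n → G) (y : G) :
    rho x (List.ofFn (Fin.snoc τ y : Fin (n + 1) → G)) = pcomm (rho x (List.ofFn τ)) y := by
  rw [List.ofFn_succ']
  simp [rho, List.foldl_append]

theorem mk_mem_center_of_mem_lowerCentralSeries {n : ℕ} {a : G}
    (ha : a ∈ (⊤ : Subgroup G).lowerCentralSeries n) :
    (a : G ⧸ (⊤ : Subgroup G).lowerCentralSeries (n + 1)) ∈
      center (G ⧸ (⊤ : Subgroup G).lowerCentralSeries (n + 1)) := by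
  refine mem_center_iff.mpr fun q => QuotientGroup.induction_on q fun x => ?_
  rw [← mk_mul, ← mk_mul, QuotientGroup.eq]
  simpa [pcomm, mul_assoc] using pcomm_mem_lowerCentralSeries_succ ha x

theorem mk_conj_eq_of_mem_center {N : Subgroup G} [N.Normal] {c : G}
    (hc : (c : G ⧸ N) ∈ center (G ⧸ N)) (b : G) : ((b⁻¹ * c * b : G) : G ⧸ N) = c := by
  rw [mk_mul, mk_mul, mk_inv, mul_assoc, ← mem_center_iff.mp hc, inv_mul_cancel_left]

def centerMk (n : ℕ) : (⊤ : Subgroup G).lowerCentralSeries n →*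
    center (G ⧸ (⊤ : Subgroup G).lowerCentralSeries (n + 1)) :=
  ((mk' _).comp (Subgroup.subtype _)).codRestrict _
    fun a => mk_mem_center_of_mem_lowerCentralSeries a.2

@[simp]
theorem coe_centerMk {n : ℕ} (a : (⊤ : Subgroup G).lowerCentralSeries n) :
    (centerMk n a : G ⧸ (⊤ : Subgroup G).lowerCentralSeries (n + 1)) = (a : G) :=
  rfl

theorem pcomm_mul_left (a b x : G) : pcomm (a * b) x = b⁻¹ * pcomm a x * b * pcomm b x := by
  simp only [pcomm]; group

theorem pcomm_mul_right (a x y : G) : pcomm a (x * y) = pcomm a y * (y⁻¹ * pcomm a x * y) := by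
  simp only [pcomm]; group

theorem mk_pcomm_mul_left {n : ℕ} {a : G} (ha : a ∈ (⊤ : Subgroup G).lowerCentralSeries n)
    (b x : G) : ((pcomm (a * b) x : G) : G ⧸ (⊤ : Subgroup G).lowerCentralSeries (n + 2)) =
      (pcomm a x : G) * (pcomm b x : G) := by
  rw [pcomm_mul_left, mk_mul,
    mk_conj_eq_of_mem_center (mk_mem_center_of_mem_lowerCentralSeries
      (pcomm_mem_lowerCentralSeries_succ ha x))]

theorem mk_pcomm_mul_right {n : ℕ} {a : G} (ha : a ∈ (⊤ : Subgroup G).lowerCentralSeries n)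
    (x y : G) : ((pcomm a (x * y) : G) : G ⧸ (⊤ : Subgroup G).lowerCentralSeries (n + 2)) =
      (pcomm a x : G) * (pcomm a y : G) := by
  have hx := mk_mem_center_of_mem_lowerCentralSeries (pcomm_mem_lowerCentralSeries_succ ha x)
  rw [pcomm_mul_right, mk_mul, mk_conj_eq_of_mem_center hx, mem_center_iff.mp hx]

def pcommBihom (n : ℕ) : (⊤ : Subgroup G).lowerCentralSeries n →*
    G →* center (G ⧸ (⊤ : Subgroup G).lowerCentralSeries (n + 2)) :=
  MonoidHom.mk'
    (fun a => MonoidHom.mk'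
      (fun x => centerMk (n + 1) ⟨pcomm a x, pcomm_mem_lowerCentralSeries_succ a.2 x⟩)
      fun x y => Subtype.ext (mk_pcomm_mul_right a.2 x y))
    fun a b => MonoidHom.ext fun x => Subtype.ext (mk_pcomm_mul_left a.2 b x)

@[simp]
theorem coe_pcommBihom {n : ℕ} (a : (⊤ : Subgroup G).lowerCentralSeries n) (x : G) :
    (pcommBihom n a x : G ⧸ (⊤ : Subgroup G).lowerCentralSeries (n + 2)) = (pcomm (a : G) x : G) :=
  rfl

theorem pcommBihom_eq_of_centerMk_eq {n : ℕ} {a b : (⊤ : Subgroup G).lowerCentralSeries n}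
    (h : centerMk n a = centerMk n b) : pcommBihom n a = pcommBihom n b := by
  have hab : (b⁻¹ * a : G) ∈ (⊤ : Subgroup G).lowerCentralSeries (n + 1) :=
    QuotientGroup.eq.mp (congrArg Subtype.val h.symm)
  have hker : pcommBihom n (b⁻¹ * a) = 1 := MonoidHom.ext fun x => Subtype.ext <|
    (QuotientGroup.eq_one_iff _).mpr (pcomm_mem_lowerCentralSeries_succ hab x)
  rw [← mul_inv_cancel_left b a, map_mul, hker, mul_one]

def rhoTuple (n : ℕ) (x : G) (τ : Fin n → G) : (⊤ : Subgroup G).lowerCentralSeries n :=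
  ⟨rho x (List.ofFn τ), rho_ofFn_mem_lowerCentralSeries x τ⟩

theorem pcommBihom_rhoTuple {n : ℕ} (x : G) (τ : Fin n → G) (y : G) :
    pcommBihom n (rhoTuple n x τ) y = centerMk (n + 1) (rhoTuple (n + 1) x (Fin.snoc τ y)) :=
  Subtype.ext <| by
    rw [coe_pcommBihom, coe_centerMk]
    exact congrArg _ (rho_ofFn_snoc x τ y).symm

variable (S R : Finset G)

def rhoWord (n : ℕ) (ℓ : (Fin n → G) → G → ℕ) : (⊤ : Subgroup G).lowerCentralSeries n :=
  ((Finset.univ : Finset (Fin n → R)).toList.map fun τ =>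
    (S.toList.map fun s => rhoTuple n (s ^ ℓ (fun j => τ j) s) fun j => τ j).prod).prod

theorem map_rhoWord {M : Type*} [CommMonoid M] {n : ℕ}
    (f : (⊤ : Subgroup G).lowerCentralSeries n →* M) (ℓ : (Fin n → G) → G → ℕ) :
    f (rhoWord S R n ℓ) =
      ∏ τ : Fin n → R, ∏ s ∈ S, f (rhoTuple n (s ^ ℓ (fun j => τ j) s) fun j => τ j) := by
  simp [rhoWord, map_list_prod, List.map_map, Function.comp_def, Finset.prod_map_toList]

theorem mk'_rhoWord {n : ℕ} (ℓ : (Fin n → G) → G → ℕ) :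
    QuotientGroup.mk' ((⊤ : Subgroup G).lowerCentralSeries (n + 1)) (rhoWord S R n ℓ : G) =
      ((Finset.univ : Finset (Fin n → R)).toList.map (fun τ =>
        (S.toList.map (fun s =>
          QuotientGroup.mk' ((⊤ : Subgroup G).lowerCentralSeries (n + 1))
            (rho (s ^ ℓ (fun j => (τ j : G)) s)
              (List.ofFn (fun j => ((τ j : G))))))).prod)).prod := by
  simp only [rhoWord, SubmonoidClass.coe_list_prod, List.map_map, map_list_prod, Function.comp_def]
  rfl

theorem exists_centerMk_eq_prod_pcommBihom (hgen : closure (S : Set G) = ⊤)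
    (hSR : ∀ s ∈ S, s ∈ R ∨ s⁻¹ ∈ R) {n : ℕ} (g : (⊤ : Subgroup G).lowerCentralSeries (n + 1)) :
    ∃ c : G → (⊤ : Subgroup G).lowerCentralSeries n,
      centerMk (n + 1) g = ∏ x ∈ R, pcommBihom n (c x) x := by
  let Φ : (G → (⊤ : Subgroup G).lowerCentralSeries n) →*
      center (G ⧸ (⊤ : Subgroup G).lowerCentralSeries (n + 2)) :=
    { toFun := fun c => ∏ x ∈ R, pcommBihom n (c x) x
      map_one' := Finset.prod_eq_one fun x _ => by rw [Pi.one_apply, map_one]; rfl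
      map_mul' := fun c d => by
        simp only [Pi.mul_apply, map_mul, MonoidHom.mul_apply, Finset.prod_mul_distrib] }
  have hrange : ∀ a y, pcommBihom n a y ∈ Φ.range := by
    intro a y
    have hsingle : ∀ s ∈ R, pcommBihom n a s ∈ Φ.range := fun s hs =>
      ⟨Pi.mulSingle s a, by
        rw [MonoidHom.coe_mk, OneHom.coe_mk, Finset.prod_eq_single_of_mem s hs fun b _ hb => by
          rw [Pi.mulSingle_eq_of_ne hb, map_one]; rfl, Pi.mulSingle_eq_same]⟩
    suffices closure (S : Set G) ≤ Φ.range.comap (pcommBihom n a) from this (hgen ▸ mem_top y)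
    refine (closure_le _).mpr fun s hs => ?_
    rcases hSR s hs with h | h
    · exact mem_comap.mpr (hsingle s h)
    · simpa only [SetLike.mem_coe, mem_comap, map_inv, inv_inv] using inv_mem (hsingle _ h)
  have hle : (⊤ : Subgroup G).lowerCentralSeries (n + 1) ≤
      ((center _).subtype.comp Φ).range.comap
        (mk' ((⊤ : Subgroup G).lowerCentralSeries (n + 2))) := by
    refine commutator_le.mpr fun p hp q _ => ?_
    obtain ⟨c, hc⟩ := hrange ⟨p⁻¹, inv_mem hp⟩ q⁻¹
    refine ⟨c, ?_⟩
    rw [MonoidHom.comp_apply, hc, Subgroup.coe_subtype, coe_pcommBihom, mk'_apply,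
      pcomm_eq_commutatorElement, inv_inv, inv_inv]
  obtain ⟨c, hc⟩ := hle g.2
  exact ⟨c, Subtype.ext hc.symm⟩

theorem exists_rhoWord_expansion (hgen : closure (S : Set G) = ⊤)
    (hSR : ∀ s ∈ S, s ∈ R ∨ s⁻¹ ∈ R) (P : (G → ℕ) → Prop)
    (hbase : ∀ g : G, ∃ ℓ₀, P ℓ₀ ∧ Abelianization.of g = ∏ s ∈ S, Abelianization.of s ^ ℓ₀ s) :
    ∀ (n : ℕ) (g : (⊤ : Subgroup G).lowerCentralSeries n),
      ∃ ℓ : (Fin n → G) → G → ℕ, (∀ τ, (∀ j, τ j ∈ R) → P (ℓ τ)) ∧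
        centerMk n g = centerMk n (rhoWord S R n ℓ)
  | 0, g => by
    obtain ⟨ℓ₀, hP, hg⟩ := hbase g
    refine ⟨fun _ => ℓ₀, fun _ _ => hP, ?_⟩
    let φ : Abelianization G →* center (G ⧸ (⊤ : Subgroup G).lowerCentralSeries 1) :=
      Abelianization.lift ((centerMk 0).comp ((MonoidHom.id G).codRestrict _ mem_top))
    have hφ : ∀ x : (⊤ : Subgroup G).lowerCentralSeries 0, centerMk 0 x = φ (.of x) := fun _ => rfl
    rw [map_rhoWord, Fintype.prod_unique, hφ, hg, map_prod]
    refine Finset.prod_congr rfl fun s _ => ?_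
    rw [hφ, ← map_pow]
    rfl
  | n + 1, g => by
    obtain ⟨c, hc⟩ := exists_centerMk_eq_prod_pcommBihom S R hgen hSR g
    choose ℓ hP hℓ using fun x => exists_rhoWord_expansion hgen hSR P hbase n (c x)
    refine ⟨fun σ => ℓ (σ (Fin.last n)) (Fin.init σ), fun σ hσ => hP _ _ fun j => hσ _, ?_⟩
    have hsnoc : ∀ (τ : Fin n → R) (x : R),
        (fun j => ((Fin.snoc τ x : Fin (n + 1) → R) j : G)) =
          Fin.snoc (fun j => (τ j : G)) (x : G) :=
      fun τ x => Fin.comp_snoc Subtype.val τ x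
    rw [hc, map_rhoWord]
    calc ∏ x ∈ R, pcommBihom n (c x) x
        = ∏ x ∈ R, pcommBihom n (rhoWord S R n (ℓ x)) x :=
          Finset.prod_congr rfl fun x _ => by rw [pcommBihom_eq_of_centerMk_eq (hℓ x)]
      _ = ∏ p : R × (Fin n → R), ∏ s ∈ S, centerMk (n + 1)
            (rhoTuple (n + 1) (s ^ ℓ p.1 (fun j => p.2 j) s) (Fin.snoc (fun j => p.2 j) p.1)) := by
          rw [← Finset.prod_coe_sort, Fintype.prod_prod_type]
          refine Finset.prod_congr rfl fun x _ => ?_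
          rw [← MonoidHom.flip_apply, map_rhoWord]
          simp only [MonoidHom.flip_apply, pcommBihom_rhoTuple]
      _ = _ := Fintype.prod_equiv (Fin.snocEquiv fun _ => R) _ _ fun p => by
          simp [hsnoc]

theorem exists_list_prod_mul_mem_commutator [Fintype G] (hS : ∀ s : G, s ∈ S ↔ s⁻¹ ∈ S)
    (hgen : closure (S : Set G) = ⊤) (g : G) :
    ∃ l : List G, (∀ x ∈ l, x ∈ (S : Set G)) ∧
      l.length ≤ quotDiam (S : Set G) Set.univ (commutator G : Set G) ∧
      ∃ u ∈ (commutator G : Set G), g = l.prod * u := by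
  have hinv : (S : Set G)⁻¹ = S := Set.ext fun x => (hS x).symm
  have hword : ∀ h : G, ∃ l : List G, (∀ x ∈ l, x ∈ (S : Set G)) ∧ l.prod = h := fun h =>
    Submonoid.exists_list_of_mem_closure (s := (S : Set G)) <| by
      have h1 : h ∈ (closure (S : Set G)).toSubmonoid := hgen ▸ mem_top h
      rwa [closure_toSubmonoid, hinv, Set.union_self] at h1
  choose w hwS hw using hword
  refine Nat.sInf_mem (s := {D | ∀ h ∈ Set.univ, ∃ l : List G, (∀ x ∈ l, x ∈ (S : Set G)) ∧
      l.length ≤ D ∧ ∃ u ∈ (commutator G : Set G), h = l.prod * u})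
    ⟨Finset.univ.sup fun h => (w h).length, fun h _ => ⟨w h, hwS h,
      Finset.le_sup (f := fun h => (w h).length) (Finset.mem_univ h), 1, one_mem _,
      by rw [hw, mul_one]⟩⟩ g (Set.mem_univ g)

theorem exists_reduced_exponents {A : Type*} [CommGroup A] (hS : ∀ s : G, s ∈ S ↔ s⁻¹ ∈ S)
    (f : G →* A) (m : G → ℕ) :
    ∃ ℓ₀ : G → ℕ, (∀ s, ℓ₀ s ≤ m s) ∧ (∀ s ∈ S, s ≠ s⁻¹ → ℓ₀ s * ℓ₀ s⁻¹ = 0) ∧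
      ∏ s ∈ S, f s ^ m s = ∏ s ∈ S, f s ^ ℓ₀ s := by
  -- `k s` occurrences of `s` cancel against as many of `s⁻¹`; nothing cancels when `s = s⁻¹`,
  -- since then `f s ^ k` need not be `1`.
  let k : G → ℕ := fun s => if s = s⁻¹ then 0 else min (m s) (m s⁻¹)
  refine ⟨fun s => m s - k s, fun s => Nat.sub_le _ _, fun s _ hs => ?_, ?_⟩
  · have hs' : s⁻¹ ≠ s⁻¹⁻¹ := by rwa [inv_inv, ne_comm]
    simp only [k, if_neg hs, if_neg hs', inv_inv]
    rcases le_total (m s) (m s⁻¹) with h | h <;> simp [h]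
  · have hk_inv : ∀ s, k s⁻¹ = k s := fun s => by
      simp only [k, inv_inv]
      rw [eq_comm (a := s⁻¹), min_comm]
    have hk : ∏ s ∈ S, f s ^ k s = 1 :=
      Finset.prod_involution (fun s _ => s⁻¹)
        (fun s _ => by rw [hk_inv, map_inv, inv_pow, mul_inv_cancel])
        (fun s _ hne heq => hne (by rw [show k s = 0 from if_pos heq.symm, pow_zero]))
        (fun s hs => (hS s).mp hs) (fun s _ => inv_inv s)
    rw [← mul_one (∏ s ∈ S, f s ^ (m s - k s)), ← hk, ← Finset.prod_mul_distrib]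
    refine Finset.prod_congr rfl fun s _ => ?_
    rw [← pow_add, Nat.sub_add_cancel (by simp only [k]; split_ifs <;> omega)]

theorem exists_abelianization_expansion [Fintype G] (hS : ∀ s : G, s ∈ S ↔ s⁻¹ ∈ S)
    (hgen : closure (S : Set G) = ⊤) (g : G) :
    ∃ ℓ₀ : G → ℕ, (∑ s ∈ S, ℓ₀ s ≤ quotDiam (S : Set G) Set.univ (commutator G : Set G) ∧
        ∀ s ∈ S, s ≠ s⁻¹ → ℓ₀ s * ℓ₀ s⁻¹ = 0) ∧
      Abelianization.of g = ∏ s ∈ S, Abelianization.of s ^ ℓ₀ s := by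
  obtain ⟨l, hlS, hlen, u, hu, rfl⟩ := exists_list_prod_mul_mem_commutator S hS hgen g
  obtain ⟨ℓ₀, hle, hzero, hprod⟩ := exists_reduced_exponents S hS Abelianization.of (l.count ·)
  have hsub : l.toFinset ⊆ S := fun x hx => hlS x (List.mem_toFinset.mp hx)
  have hcount : ∀ x ∈ S, x ∉ l.toFinset → l.count x = 0 := fun x _ hx =>
    List.count_eq_zero.mpr (mt List.mem_toFinset.mpr hx)
  refine ⟨ℓ₀, ⟨?_, hzero⟩, ?_⟩
  · calc ∑ s ∈ S, ℓ₀ s ≤ ∑ s ∈ S, l.count s := Finset.sum_le_sum fun s _ => hle s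
      _ = l.length := by rw [← List.sum_toFinset_count_eq_length, Finset.sum_subset hsub hcount]
      _ ≤ _ := hlen
  · have hu1 : Abelianization.of u = 1 := MonoidHom.mem_ker.mp ((Abelianization.ker_of G).symm ▸ hu)
    rw [map_mul, hu1, mul_one, map_list_prod, Finset.prod_list_map_count,
      Finset.prod_subset hsub fun x hS hx => by rw [hcount x hS hx, pow_zero], hprod]

end LowerCentralSeries

theorem g_coset_expression_general (G : Type*) [Group G] [Fintype G]
    (S R : Finset G) (hS : ∀ s : G, s ∈ S ↔ s⁻¹ ∈ S)
    (hgen : Subgroup.closure (S : Set G) = ⊤)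
    (hR : ∀ s ∈ S, (({s, s⁻¹} : Finset G) ∩ R).card = 1) :
    ∀ i : ℕ, 1 ≤ i → ∀ g ∈ (⊤ : Subgroup G).lowerCentralSeries (i - 1),
      ∃ ℓ : (Fin (i - 1) → G) → G → ℕ,
        (∀ τ : Fin (i - 1) → G, (∀ j, τ j ∈ R) →
          (∑ s ∈ S, ℓ τ s) ≤ quotDiam (S : Set G) (Set.univ : Set G) (commutator G : Set G) ∧
            ∀ s ∈ S, s ≠ s⁻¹ → ℓ τ s * ℓ τ s⁻¹ = 0) ∧
        QuotientGroup.mk' ((⊤ : Subgroup G).lowerCentralSeries i) g =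
          ((Finset.univ : Finset (Fin (i - 1) → {x // x ∈ R})).toList.map (fun τ =>
            (S.toList.map (fun s =>
              QuotientGroup.mk' ((⊤ : Subgroup G).lowerCentralSeries i)
                (rho (s ^ ℓ (fun j => (τ j : G)) s)
                  (List.ofFn (fun j => ((τ j : G))))))).prod)).prod := by
  rintro i hi g hg
  obtain ⟨n, rfl⟩ : ∃ n, i = n + 1 := ⟨i - 1, by omega⟩
  have hSR : ∀ s ∈ S, s ∈ R ∨ s⁻¹ ∈ R := fun s hs => by
    obtain ⟨t, ht⟩ := Finset.card_pos.mp (hR s hs ▸ Nat.one_pos)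
    simp only [Finset.mem_inter, Finset.mem_insert, Finset.mem_singleton] at ht
    rcases ht with ⟨rfl | rfl, ht⟩ <;> simp [ht]
  obtain ⟨ℓ, hℓ, hgℓ⟩ := exists_rhoWord_expansion S R hgen hSR _
    (exists_abelianization_expansion S hS hgen) n ⟨g, hg⟩
  exact ⟨ℓ, hℓ, (congrArg Subtype.val hgℓ).trans (mk'_rhoWord S R ℓ)⟩

/-- Corollary `g_expression`: every `g ∈ G_i` is, modulo `G_{i+1}`, a product
over tuples `τ ∈ R^{i-1}` and `s ∈ S` of `ρ(s^{ℓ_τ(s)}, τ)`, where each `ℓ_τ : S → ℕ` has total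
mass at most `Diam_S(G_ab)` and uses at most one of `s`, `s⁻¹`. -/
theorem g_coset_expression (G : Type*) [Group G] [Fintype G] (hnil : Group.IsNilpotent G)
    (S R : Finset G) (hS : ∀ s : G, s ∈ S ↔ s⁻¹ ∈ S)
    (hgen : Subgroup.closure (S : Set G) = ⊤) (hRS : R ⊆ S)
    (hR : ∀ s ∈ S, (({s, s⁻¹} : Finset G) ∩ R).card = 1) :
    ∀ i : ℕ, 1 ≤ i → ∀ g ∈ (⊤ : Subgroup G).lowerCentralSeries (i - 1),
      ∃ ℓ : (Fin (i - 1) → G) → G → ℕ,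
        (∀ τ : Fin (i - 1) → G, (∀ j, τ j ∈ R) →
          (∑ s ∈ S, ℓ τ s) ≤ quotDiam (S : Set G) (Set.univ : Set G) (commutator G : Set G) ∧
            ∀ s ∈ S, s ≠ s⁻¹ → ℓ τ s * ℓ τ s⁻¹ = 0) ∧
        QuotientGroup.mk' ((⊤ : Subgroup G).lowerCentralSeries i) g =
          ((Finset.univ : Finset (Fin (i - 1) → {x // x ∈ R})).toList.map (fun τ =>
            (S.toList.map (fun s =>
              QuotientGroup.mk' ((⊤ : Subgroup G).lowerCentralSeries i)
                (rho (s ^ ℓ (fun j => (τ j : G)) s)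
                  (List.ofFn (fun j => ((τ j : G))))))).prod)).prod :=
  g_coset_expression_general G S R hS hgen hR

end
end

section
/- Let G be a finite group generated by a symmetric set S ⊆ G, let G₂ = [G,G], let D := Diam_S(G₂) be the diameter of G₂ in the Cayley graph of G with generating set S, and let P_t be the heat kernel of the simple random walk. Then for every t ≥ 0, (1/2)·∑_{y ∈ G} | P_t(1, y) − (1/|G₂|)·∑_{h ∈ G₂} P_t(h, y) | ≤ (|G|/2)·exp( −t / ( |S|·D² ) ). -/
open scoped BigOperators
open scoped Classical

noncomputable section

/-! The difference `v = δ₁ - u_{G₂}` of the two initial distributions, a row vector, has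
vanishing sum over every coset of the normal subgroup `G₂`, and the walk preserves this because
it commutes with averaging over `G₂` (the matrix `transMatrix G₂`). On such vectors, writing each
`h ∈ G₂` as a word of length at most `D = Diam_S(G₂)` and applying Minkowski along the word gives
the Poincaré inequality `2 ‖w‖² ≤ D² ∑_{s ∈ S} ‖w(· s) - w‖²`, that is, a spectral gap
`1 / (|S| D²)` of the Dirichlet form of `I - K`. By Grönwall,
`‖v P_t‖₂² ≤ e^{-2t/(|S| D²)} ‖v‖₂²`, and Cauchy–Schwarz turns this into the bound in total
variation. -/

open Matrix

section Words

variable {G : Type*} [Group G] [Finite G] {S : Set G}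

theorem exists_list_prod_eq_of_closure_eq_top (hgen : Subgroup.closure S = ⊤) (g : G) :
    ∃ l : List G, (∀ x ∈ l, x ∈ S) ∧ l.prod = g := by
  refine Submonoid.exists_list_of_mem_closure ?_
  rw [← Subgroup.closure_toSubmonoid_of_finite, hgen]
  exact Subgroup.mem_top g

theorem exists_list_length_le_setDiam_prod_eq (hgen : Subgroup.closure S = ⊤) {H : Set G}
    {h : G} (hh : h ∈ H) :
    ∃ l : List G, (∀ x ∈ l, x ∈ S) ∧ l.length ≤ setDiam S H ∧ l.prod = h := by
  obtain ⟨l, hlS, hlen, hprod⟩ := Nat.sInf_mem (s := {n | ∃ l : List G,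
      (∀ x ∈ l, x ∈ S) ∧ l.length = n ∧ l.prod = h}) <| by
    obtain ⟨l, hl⟩ := exists_list_prod_eq_of_closure_eq_top hgen h
    exact ⟨l.length, l, hl.1, rfl, hl.2⟩
  exact ⟨l, hlS, hlen ▸ le_csSup ((H.toFinite.image _).bddAbove) ⟨h, hh, rfl⟩, hprod⟩

end Words

section Energy

variable {G : Type*} [Group G] [Fintype G]

def incrementEnergy (w : G → ℝ) (g : G) : ℝ := ∑ x, (w (x * g) - w x) ^ 2

theorem incrementEnergy_nonneg (w : G → ℝ) (g : G) : 0 ≤ incrementEnergy w g :=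
  Finset.sum_nonneg fun _ _ => sq_nonneg _

theorem sum_sq_comp_mul_right (w : G → ℝ) (g : G) : ∑ x, w (x * g) ^ 2 = ∑ x, w x ^ 2 :=
  Equiv.sum_comp (Equiv.mulRight g) (fun x => w x ^ 2)

theorem incrementEnergy_eq (w : G → ℝ) (g : G) :
    incrementEnergy w g = 2 * ∑ x, w x ^ 2 - 2 * ∑ x, w x * w (x * g) := by
  have hsq : ∀ x, (w (x * g) - w x) ^ 2 = w (x * g) ^ 2 + w x ^ 2 - 2 * (w x * w (x * g)) :=
    fun x => by ring
  simp only [incrementEnergy, hsq, Finset.sum_sub_distrib, Finset.sum_add_distrib,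
    sum_sq_comp_mul_right, ← Finset.mul_sum]
  ring

/-- Minkowski's inequality in `ℓ²(G)`, after splitting the increment along `g * h` at `x * g`. -/
theorem sqrt_incrementEnergy_mul_le (w : G → ℝ) (g h : G) :
    √(incrementEnergy w (g * h)) ≤ √(incrementEnergy w g) + √(incrementEnergy w h) := by
  set a : G → ℝ := fun x => w (x * g * h) - w (x * g)
  set b : G → ℝ := fun x => w (x * g) - w x
  have ha : ∑ x, a x ^ 2 = incrementEnergy w h :=
    Equiv.sum_comp (Equiv.mulRight g) (fun x => (w (x * h) - w x) ^ 2)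
  have hb : ∑ x, b x ^ 2 = incrementEnergy w g := rfl
  have hcs := Real.sum_mul_le_sqrt_mul_sqrt Finset.univ a b
  rw [ha, hb] at hcs
  refine Real.sqrt_le_iff.2 ⟨by positivity, ?_⟩
  calc incrementEnergy w (g * h) = ∑ x, a x ^ 2 + 2 * ∑ x, a x * b x + ∑ x, b x ^ 2 := by
        simp only [incrementEnergy, a, b, ← mul_assoc, Finset.mul_sum, ← Finset.sum_add_distrib]
        exact Finset.sum_congr rfl fun x _ => by ring
    _ ≤ incrementEnergy w h + 2 * (√(incrementEnergy w h) * √(incrementEnergy w g)) +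
        incrementEnergy w g := by rw [ha, hb]; gcongr
    _ = (√(incrementEnergy w g) + √(incrementEnergy w h)) ^ 2 := by
        rw [add_sq, Real.sq_sqrt (incrementEnergy_nonneg w g),
          Real.sq_sqrt (incrementEnergy_nonneg w h)]
        ring

theorem incrementEnergy_list_prod_le {T : Finset G} {l : List G} (hl : ∀ x ∈ l, x ∈ T)
    (w : G → ℝ) :
    incrementEnergy w l.prod ≤ l.length ^ 2 * ∑ s ∈ T, incrementEnergy w s := by
  set E := ∑ s ∈ T, incrementEnergy w s
  have hsqrt : √(incrementEnergy w l.prod) ≤ l.length * √E := by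
    induction l with
    | nil => simp [incrementEnergy]
    | cons s l ih =>
      have hs : √(incrementEnergy w s) ≤ √E := Real.sqrt_le_sqrt <|
        Finset.single_le_sum (fun s _ => incrementEnergy_nonneg w s) (hl s List.mem_cons_self)
      calc √(incrementEnergy w (s :: l).prod)
          ≤ √(incrementEnergy w s) + √(incrementEnergy w l.prod) :=
            sqrt_incrementEnergy_mul_le w s l.prod
        _ ≤ √E + l.length * √E :=
            add_le_add hs (ih fun x hx => hl x (List.mem_cons_of_mem s hx))
        _ = (s :: l).length * √E := by push_cast [List.length_cons]; ring
  calc incrementEnergy w l.prod = √(incrementEnergy w l.prod) ^ 2 :=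
        (Real.sq_sqrt (incrementEnergy_nonneg w _)).symm
    _ ≤ (l.length * √E) ^ 2 := by gcongr
    _ = l.length ^ 2 * E := by
        rw [mul_pow, Real.sq_sqrt (Finset.sum_nonneg fun s _ => incrementEnergy_nonneg w s)]

/-- Poincaré inequality: summing over `h ∈ H` kills the cross terms `∑ x, w x * w (x * h)`. -/
theorem two_mul_sum_sq_le_of_sum_mul_eq_zero {H : Finset G} (hH : H.Nonempty) {w : G → ℝ}
    (hw : ∀ c, ∑ h ∈ H, w (c * h) = 0) {S : Set G} {D : ℕ}
    (hword : ∀ h ∈ H, ∃ l : List G, (∀ x ∈ l, x ∈ S) ∧ l.length ≤ D ∧ l.prod = h) :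
    2 * ∑ x, w x ^ 2 ≤ D ^ 2 * ∑ s ∈ S.toFinset, incrementEnergy w s := by
  set E := ∑ s ∈ S.toFinset, incrementEnergy w s
  have hsum : ∑ h ∈ H, incrementEnergy w h = H.card * (2 * ∑ x, w x ^ 2) := by
    have hcross : ∑ h ∈ H, ∑ x, w x * w (x * h) = 0 := by
      rw [Finset.sum_comm]
      exact Finset.sum_eq_zero fun x _ => by rw [← Finset.mul_sum, hw x, mul_zero]
    simp only [incrementEnergy_eq, Finset.sum_sub_distrib, ← Finset.mul_sum, hcross,
      Finset.sum_const, nsmul_eq_mul]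
    ring
  have hle : ∑ h ∈ H, incrementEnergy w h ≤ H.card * (D ^ 2 * E) := by
    rw [← nsmul_eq_mul, ← Finset.sum_const]
    refine Finset.sum_le_sum fun h hh => ?_
    obtain ⟨l, hlS, hlen, rfl⟩ := hword h hh
    have hE : 0 ≤ E := Finset.sum_nonneg fun s _ => incrementEnergy_nonneg w s
    calc incrementEnergy w l.prod ≤ l.length ^ 2 * E :=
          incrementEnergy_list_prod_le (fun x hx => Set.mem_toFinset.2 (hlS x hx)) w
      _ ≤ D ^ 2 * E := by gcongr
  exact le_of_mul_le_mul_left (hsum ▸ hle) (Nat.cast_pos.2 hH.card_pos)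

end Energy

section TransMatrix

variable {G : Type*} [Group G] [Fintype G]

theorem sum_transMatrix_apply_mul (U : Set G) (x : G) (f : G → ℝ) :
    ∑ y, transMatrix U x y * f y = (U.ncard : ℝ)⁻¹ * ∑ u ∈ U.toFinset, f (x * u) := by
  rw [← Equiv.sum_comp (Equiv.mulLeft x), Finset.mul_sum, ← Set.filter_mem_univ_eq_toFinset,
    Finset.sum_filter]
  simp only [transMatrix, Equiv.coe_mulLeft, inv_mul_cancel_left, ite_mul, zero_mul]

theorem transMatrix_mulVec_apply (U : Set G) (w : G → ℝ) (x : G) :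
    (transMatrix U *ᵥ w) x = (U.ncard : ℝ)⁻¹ * ∑ u ∈ U.toFinset, w (x * u) :=
  sum_transMatrix_apply_mul U x w

theorem transMatrix_mul_apply (U : Set G) (M : Matrix G G ℝ) (x y : G) :
    (transMatrix U * M) x y = (U.ncard : ℝ)⁻¹ * ∑ u ∈ U.toFinset, M (x * u) y :=
  sum_transMatrix_apply_mul U x (M · y)

theorem transpose_transMatrix {U : Set G} (hU : SymmSet U) :
    (transMatrix U)ᵀ = transMatrix U := by
  ext x y
  simp only [transpose_apply, transMatrix, hU (y⁻¹ * x), _root_.mul_inv_rev, inv_inv]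

theorem transMatrix_commute (U : Set G) (N : Subgroup G) [hN : N.Normal] :
    Commute (transMatrix U) (transMatrix (N : Set G)) := by
  ext x y
  rw [mul_apply, mul_apply]
  refine Fintype.sum_bijective (fun z => y * z⁻¹ * x)
    ((Equiv.inv G).trans ((Equiv.mulLeft y).trans (Equiv.mulRight x))).bijective _ _ fun z => ?_
  have hNz : x⁻¹ * (y * z⁻¹ * x) ∈ N ↔ z⁻¹ * y ∈ N := by
    rw [show x⁻¹ * (y * z⁻¹ * x) = x⁻¹ * (y * z⁻¹) * x by group, hN.mem_comm_iff,
      mul_inv_cancel_left, hN.mem_comm_iff]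
  have hUz : (y * z⁻¹ * x)⁻¹ * y = x⁻¹ * z := by group
  simp only [transMatrix, SetLike.mem_coe, hNz, hUz]
  ring

theorem transMatrix_subgroup_mul_self (N : Subgroup G) :
    transMatrix (N : Set G) * transMatrix N = transMatrix N := by
  ext x y
  have hmul : ∀ u ∈ (N : Set G).toFinset,
      transMatrix (N : Set G) (x * u) y = transMatrix N x y := by
    intro u hu
    have hu : u⁻¹ ∈ N := inv_mem (Set.mem_toFinset.1 hu)
    simp only [transMatrix, _root_.mul_inv_rev, mul_assoc, SetLike.mem_coe,
      Subgroup.mul_mem_cancel_left N hu]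
  have hcard : ((N : Set G).ncard : ℝ) ≠ 0 := Nat.cast_ne_zero.2 (Nat.card_pos (α := N)).ne'
  rw [transMatrix_mul_apply, Finset.sum_congr rfl hmul, Finset.sum_const,
    ← Set.ncard_eq_toFinset_card', nsmul_eq_mul, inv_mul_cancel_left₀ hcard]

theorem vecMul_one_sub_transMatrix_vecMul_transMatrix (N : Subgroup G) (v : G → ℝ) :
    v ᵥ* (1 - transMatrix (N : Set G)) ᵥ* transMatrix N = 0 := by
  rw [vecMul_vecMul, sub_mul, one_mul, transMatrix_subgroup_mul_self, sub_self, vecMul_zero]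

theorem single_one_vecMul_one_sub_transMatrix_vecMul_apply (N : Subgroup G)
    (M : Matrix G G ℝ) (y : G) :
    (Pi.single 1 1 ᵥ* (1 - transMatrix (N : Set G)) ᵥ* M) y =
      M 1 y - (∑ h : N, M h y) / Nat.card N := by
  have hsub : ∑ h : N, M h y = ∑ u ∈ (N : Set G).toFinset, M u y :=
    (Finset.sum_subtype _ (fun _ => Set.mem_toFinset) (M · y)).symm
  rw [vecMul_vecMul, single_one_vecMul, row_apply, sub_mul, one_mul, Matrix.sub_apply,
    transMatrix_mul_apply, hsub, div_eq_inv_mul]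
  simp only [one_mul]
  rfl

theorem abs_one_sub_transMatrix_apply_le_one (U : Set G) (x y : G) :
    |(1 - transMatrix U) x y| ≤ 1 := by
  rw [Matrix.sub_apply, one_apply]
  refine abs_sub_le_of_nonneg_of_le (by positivity) (by split_ifs <;> norm_num) ?_ ?_ <;>
    simp only [transMatrix] <;> split_ifs
  exacts [by positivity, le_rfl, Nat.cast_inv_le_one _, zero_le_one]

theorem dotProduct_self_single_vecMul_one_sub_transMatrix_le (U : Set G) (x : G) :
    (Pi.single x (1 : ℝ) ᵥ* (1 - transMatrix U)) ⬝ᵥ (Pi.single x 1 ᵥ* (1 - transMatrix U)) ≤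
      Fintype.card G := by
  rw [single_one_vecMul]
  calc (1 - transMatrix U).row x ⬝ᵥ (1 - transMatrix U).row x
      = ∑ y, (1 - transMatrix U) x y * (1 - transMatrix U) x y := rfl
    _ ≤ ∑ _y : G, (1 : ℝ) := Finset.sum_le_sum fun y _ => by
        rw [← sq, sq_le_one_iff_abs_le_one]
        exact abs_one_sub_transMatrix_apply_le_one U x y
    _ = Fintype.card G := by simp

theorem sum_mul_eq_zero_of_vecMul_transMatrix_eq_zero (N : Subgroup G) {w : G → ℝ}
    (hw : w ᵥ* transMatrix (N : Set G) = 0) (c : G) :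
    ∑ h ∈ (N : Set G).toFinset, w (c * h) = 0 := by
  have hc := congrFun hw c
  rw [← transpose_transMatrix fun s => inv_mem_iff.symm, vecMul_transpose,
    transMatrix_mulVec_apply] at hc
  exact (mul_eq_zero.1 hc).resolve_left (inv_ne_zero (Nat.cast_ne_zero.2 Nat.card_pos.ne'))

theorem dotProduct_vecMul_transMatrix_sub_one {U : Set G} (hU : U.Nonempty) (w : G → ℝ) :
    w ⬝ᵥ (w ᵥ* (transMatrix U - 1)) =
      -(2 * (U.ncard : ℝ))⁻¹ * ∑ s ∈ U.toFinset, incrementEnergy w s := by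
  have hn : (U.ncard : ℝ) ≠ 0 := Nat.cast_ne_zero.2 (Set.ncard_pos U.toFinite |>.2 hU).ne'
  have hK : w ⬝ᵥ (transMatrix U *ᵥ w) =
      (U.ncard : ℝ)⁻¹ * ∑ s ∈ U.toFinset, ∑ x, w x * w (x * s) := by
    simp only [dotProduct, transMatrix_mulVec_apply, Finset.mul_sum]
    rw [Finset.sum_comm]
    exact Finset.sum_congr rfl fun _ _ => Finset.sum_congr rfl fun _ _ => by ring
  rw [dotProduct_comm, ← dotProduct_mulVec, sub_mulVec, one_mulVec, dotProduct_sub, hK]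
  simp only [incrementEnergy_eq, Finset.sum_sub_distrib, Finset.sum_const, ← Finset.mul_sum,
    nsmul_eq_mul, ← Set.ncard_eq_toFinset_card', dotProduct, ← sq]
  field_simp
  ring

theorem dotProduct_vecMul_transMatrix_sub_one_le {H : Finset G} (hH : H.Nonempty) {w : G → ℝ}
    (hw : ∀ c, ∑ h ∈ H, w (c * h) = 0) {S : Set G} {D : ℕ}
    (hword : ∀ h ∈ H, ∃ l : List G, (∀ x ∈ l, x ∈ S) ∧ l.length ≤ D ∧ l.prod = h) :
    w ⬝ᵥ (w ᵥ* (transMatrix S - 1)) ≤ -((S.ncard : ℝ) * D ^ 2)⁻¹ * (w ⬝ᵥ w) := by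
  -- if `S = ∅` or `D = 0`, the rate is `0⁻¹ = 0`
  rcases S.eq_empty_or_nonempty with rfl | hS
  · have hK : transMatrix (∅ : Set G) = 0 := by ext; simp [transMatrix]
    rw [hK, zero_sub, vecMul_neg, vecMul_one, dotProduct_neg, Set.ncard_empty, Nat.cast_zero,
      zero_mul, _root_.inv_zero, neg_zero, zero_mul, neg_nonpos]
    exact Finset.sum_nonneg fun x _ => mul_self_nonneg (w x)
  have hP := two_mul_sum_sq_le_of_sum_mul_eq_zero hH hw hword
  set E := ∑ s ∈ S.toFinset, incrementEnergy w s
  have hQ : w ⬝ᵥ w = ∑ x, w x ^ 2 := by simp only [dotProduct, sq]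
  rw [dotProduct_vecMul_transMatrix_sub_one hS, hQ, neg_mul, neg_mul, neg_le_neg_iff]
  have hn : (0 : ℝ) < S.ncard := Nat.cast_pos.2 (Set.ncard_pos S.toFinite |>.2 hS)
  rcases Nat.eq_zero_or_pos D with rfl | hD
  · have hE : 0 ≤ E := Finset.sum_nonneg fun s _ => incrementEnergy_nonneg w s
    simp only [Nat.cast_zero, ne_eq, OfNat.ofNat_ne_zero, not_false_eq_true, zero_pow, mul_zero,
      _root_.inv_zero, zero_mul]
    positivity
  rw [show ((S.ncard : ℝ) * (D : ℝ) ^ 2)⁻¹ * ∑ x, w x ^ 2 =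
    (2 * (S.ncard : ℝ))⁻¹ * ((2 * ∑ x, w x ^ 2) / (D : ℝ) ^ 2) by field_simp]
  gcongr
  rw [div_le_iff₀ (by positivity)]
  linarith

theorem dotProduct_vecMul_transMatrix_sub_one_le_of_vecMul_eq_zero {S : Set G}
    (hgen : Subgroup.closure S = ⊤) (N : Subgroup G) {w : G → ℝ}
    (hw : w ᵥ* transMatrix (N : Set G) = 0) :
    w ⬝ᵥ (w ᵥ* (transMatrix S - 1)) ≤
      -((S.ncard : ℝ) * setDiam S (N : Set G) ^ 2)⁻¹ * (w ⬝ᵥ w) :=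
  dotProduct_vecMul_transMatrix_sub_one_le ⟨1, Set.mem_toFinset.2 N.one_mem⟩
    (sum_mul_eq_zero_of_vecMul_transMatrix_eq_zero N hw)
    fun _ hh => exists_list_length_le_setDiam_prod_eq hgen (Set.mem_toFinset.1 hh)

end TransMatrix

section HeatFlow

variable {ι : Type*} [Fintype ι]

theorem hasDerivAt_vecMul_exp_smul [DecidableEq ι] (A : Matrix ι ι ℝ) (v : ι → ℝ) (t : ℝ) :
    HasDerivAt (fun u : ℝ => v ᵥ* NormedSpace.exp (u • A))
      (v ᵥ* NormedSpace.exp (t • A) ᵥ* A) t := by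
  let _ : NormedRing (Matrix ι ι ℝ) := Matrix.linftyOpNormedRing
  let _ : NormedAlgebra ℝ (Matrix ι ι ℝ) := Matrix.linftyOpNormedAlgebra
  let L : Matrix ι ι ℝ →ₗ[ℝ] ι → ℝ :=
    { toFun := (v ᵥ* ·)
      map_add' := fun M N => vecMul_add M N v
      map_smul' := fun c M => vecMul_smul v c M }
  rw [vecMul_vecMul]
  exact (LinearMap.toContinuousLinearMap L).hasFDerivAt.comp_hasDerivAt t
    (hasDerivAt_exp_smul_const A t)

theorem hasDerivAt_dotProduct_self {f : ℝ → ι → ℝ} {f' : ι → ℝ} {t : ℝ}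
    (hf : HasDerivAt f f' t) : HasDerivAt (fun u => f u ⬝ᵥ f u) (2 * (f t ⬝ᵥ f')) t := by
  have h : HasDerivAt (fun u => ∑ i, f u i * f u i) (∑ i, (f' i * f t i + f t i * f' i)) t :=
    HasDerivAt.fun_sum fun i _ => (hasDerivAt_pi.1 hf i).fun_mul (hasDerivAt_pi.1 hf i)
  refine h.congr_deriv ?_
  rw [dotProduct, Finset.mul_sum]
  exact Finset.sum_congr rfl fun _ _ => by ring

theorem dotProduct_vecMul_exp_smul_le [DecidableEq ι] (A : Matrix ι ι ℝ) (v : ι → ℝ) {g t : ℝ}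
    (hA : ∀ u : ℝ, (v ᵥ* NormedSpace.exp (u • A)) ⬝ᵥ (v ᵥ* NormedSpace.exp (u • A) ᵥ* A) ≤
      -g * ((v ᵥ* NormedSpace.exp (u • A)) ⬝ᵥ (v ᵥ* NormedSpace.exp (u • A))))
    (ht : 0 ≤ t) :
    (v ᵥ* NormedSpace.exp (t • A)) ⬝ᵥ (v ᵥ* NormedSpace.exp (t • A)) ≤
      (v ⬝ᵥ v) * Real.exp (-g * t) ^ 2 := by
  set w : ℝ → ι → ℝ := fun u : ℝ => v ᵥ* NormedSpace.exp (u • A)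
  have hQ : ∀ u, HasDerivAt (fun u => w u ⬝ᵥ w u) (2 * (w u ⬝ᵥ (w u ᵥ* A))) u :=
    fun u => hasDerivAt_dotProduct_self (hasDerivAt_vecMul_exp_smul A v u)
  have hw0 : w 0 = v := by simp [w]
  have hgron := le_gronwallBound_of_liminf_deriv_right_le (f := fun u => w u ⬝ᵥ w u)
    (δ := v ⬝ᵥ v) (K := -(2 * g)) (ε := 0) (a := 0) (b := t)
    (fun u _ => (hQ u).continuousAt.continuousWithinAt)
    (fun u _ r hr => (hQ u).hasDerivWithinAt.liminf_right_slope_le hr)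
    (by rw [hw0]) (fun u _ => by linarith [hA u]) t ⟨ht, le_rfl⟩
  rw [gronwallBound_ε0, sub_zero] at hgron
  rwa [← Real.exp_nat_mul, Nat.cast_two, show 2 * (-g * t) = -(2 * g) * t by ring]

theorem vecMul_exp_smul_vecMul_eq_zero [DecidableEq ι] {A R : Matrix ι ι ℝ} (hAR : Commute A R)
    {v : ι → ℝ} (hv : v ᵥ* R = 0) (u : ℝ) : v ᵥ* NormedSpace.exp (u • A) ᵥ* R = 0 := by
  rw [vecMul_vecMul, ((hAR.smul_left u).exp_left).eq, ← vecMul_vecMul, hv, zero_vecMul]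

theorem sum_abs_le_of_dotProduct_self_le {f : ι → ℝ} {r : ℝ} (hr : 0 ≤ r)
    (hf : f ⬝ᵥ f ≤ Fintype.card ι * r ^ 2) :
    ∑ i, |f i| ≤ Fintype.card ι * r := by
  refine le_of_pow_le_pow_left₀ two_ne_zero (by positivity) ?_
  calc (∑ i, |f i|) ^ 2 ≤ Fintype.card ι * ∑ i, |f i| ^ 2 := sq_sum_le_card_mul_sum_sq
    _ = Fintype.card ι * (f ⬝ᵥ f) := by simp only [sq_abs, dotProduct, ← sq]
    _ ≤ (Fintype.card ι * r) ^ 2 := by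
        rw [mul_pow, sq (Fintype.card ι : ℝ), mul_assoc]
        gcongr

end HeatFlow

theorem tv_identity_vs_uniform_commutator_general (G : Type*) [Group G] [Fintype G]
    (S : Set G) (hgen : Subgroup.closure S = ⊤) (t : ℝ) (ht : 0 ≤ t) :
    (∑ y : G,
        |heatKernel S t 1 y -
          (∑ h : ↥(commutator G), heatKernel S t (h : G) y) / (Nat.card (commutator G) : ℝ)|) / 2 ≤
      (Fintype.card G : ℝ) / 2 *
        Real.exp (-t / ((S.ncard : ℝ) * (setDiam S (commutator G : Set G) : ℝ) ^ 2)) := by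
  set N := commutator G
  set D := setDiam S (N : Set G)
  set v : G → ℝ := Pi.single 1 1 ᵥ* (1 - transMatrix (N : Set G))
  have hdecay : (v ᵥ* heatKernel S t) ⬝ᵥ (v ᵥ* heatKernel S t) ≤
      (v ⬝ᵥ v) * Real.exp (-((S.ncard : ℝ) * D ^ 2)⁻¹ * t) ^ 2 :=
    dotProduct_vecMul_exp_smul_le _ v (fun u =>
      dotProduct_vecMul_transMatrix_sub_one_le_of_vecMul_eq_zero hgen N <|
        vecMul_exp_smul_vecMul_eq_zero ((transMatrix_commute S N).sub_left (Commute.one_left _))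
          (vecMul_one_sub_transMatrix_vecMul_transMatrix N _) u) ht
  have hL1 := sum_abs_le_of_dotProduct_self_le (Real.exp_pos _).le <| hdecay.trans <|
    mul_le_mul_of_nonneg_right (dotProduct_self_single_vecMul_one_sub_transMatrix_le (N : Set G) 1)
      (sq_nonneg _)
  rw [show -((S.ncard : ℝ) * D ^ 2)⁻¹ * t = -t / (S.ncard * D ^ 2) by ring] at hL1
  simp only [v, single_one_vecMul_one_sub_transMatrix_vecMul_apply] at hL1
  linarith

/-- Lemma `commutator_mixing`: the total variation distance between the walk
started at the identity and the walk started uniform on `G₂` decays like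
`(|G|/2)·exp(-t/(|S|·Diam_S(G₂)²))`. -/
theorem tv_identity_vs_uniform_commutator (G : Type*) [Group G] [Fintype G]
    (S : Set G) (hS : SymmSet S) (hgen : Subgroup.closure S = ⊤) (t : ℝ) (ht : 0 ≤ t) :
    (∑ y : G,
        |heatKernel S t 1 y -
          (∑ h : ↥(commutator G), heatKernel S t (h : G) y) / (Nat.card (commutator G) : ℝ)|) / 2 ≤
      (Fintype.card G : ℝ) / 2 *
        Real.exp (-t / ((S.ncard : ℝ) * (setDiam S (commutator G : Set G) : ℝ) ^ 2)) :=
  tv_identity_vs_uniform_commutator_general G S hgen t ht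

end
end

section
/- Let G be a finite group generated by a symmetric set S ⊆ G, let G₂ = [G,G], let D := Diam_S(G₂) be the diameter of G₂ in the Cayley graph of G with generating set S, and let P_t be the heat kernel of the simple random walk. Let f : G → ℝ satisfy ∑_{x ∈ G₂·g} f(x) = 0 for every g ∈ G (the sum of f over each coset of G₂ vanishes). Then for every t ≥ 0, ‖P_t f‖₂ ≤ ‖f‖₂ · exp( −t / ( |S|·D² ) ), where (P_t f)(x) := ∑_{y ∈ G} P_t(x,y)·f(y) and ‖f‖₂ := ( (1/|G|)·∑_{x ∈ G} f(x)² )^{1/2}. -/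
open scoped BigOperators
open scoped Classical

noncomputable section

/-!
Let `ℰ(g) = ∑ₓ ∑_{s ∈ S} (g x - g (x s))² = 2|S|·⟨(I - K) g, g⟩` be the Dirichlet energy.
If `g` sums to zero on every coset of the normal subgroup `G₂`, then
`∑_{γ ∈ G₂} ‖g - g(· γ)‖² = 2 |G₂| ‖g‖²`, while telescoping along a shortest `S`-word for `γ`
and Cauchy–Schwarz give `‖g - g(· γ)‖² ≤ |γ|_S² · ℰ(g) ≤ D² · ℰ(g)`. Hence the Poincaré
inequality `‖g‖² ≤ |S| D² ⟨(I - K) g, g⟩` holds on the subspace of such functions. That subspace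
is invariant under the symmetric matrix `K`, so it has an orthonormal eigenbasis of `K`, every
eigenvalue `μ` on it satisfies `1 - μ ≥ 1 / (|S| D²)`, and `P_t` scales the coordinates of `f`
in this basis by `exp (-t (1 - μ)) ≤ exp (-t / (|S| D²))`.
-/

open Matrix Finset

theorem Matrix.exp_mulVec_of_mulVec_eq_smul {n : Type*} [Fintype n] [DecidableEq n]
    {A : Matrix n n ℝ} {v : n → ℝ} {μ : ℝ} (h : A *ᵥ v = μ • v) :
    NormedSpace.exp A *ᵥ v = Real.exp μ • v := by
  let _ : NormedRing (Matrix n n ℝ) := Matrix.linftyOpNormedRing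
  let _ : NormedAlgebra ℝ (Matrix n n ℝ) := Matrix.linftyOpNormedAlgebra
  have hpow (k : ℕ) : A ^ k *ᵥ v = μ ^ k • v := by
    induction k with
    | zero => simp
    | succ k ih => rw [pow_succ, ← mulVec_mulVec, h, mulVec_smul, ih, smul_smul, ← pow_succ']
  have hseries := (NormedSpace.exp_series_hasSum_exp' (𝕂 := ℝ) A).map
    (mulVec.addMonoidHomLeft v) (continuous_id.matrix_mulVec continuous_const)
  have hscalar := (NormedSpace.exp_series_hasSum_exp' (𝕂 := ℝ) μ).smul_const v
  rw [← Real.exp_eq_exp_ℝ] at hscalar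
  refine hseries.unique ?_
  simpa [Function.comp_def, mulVec.addMonoidHomLeft, smul_mulVec, hpow, smul_smul] using hscalar

theorem EuclideanSpace.norm_le_mul_norm_of_abs_le {ι : Type*} [Fintype ι]
    {x y : EuclideanSpace ℝ ι} {C : ℝ} (hC : 0 ≤ C) (h : ∀ i, |x i| ≤ C * |y i|) :
    ‖x‖ ≤ C * ‖y‖ := by
  refine (pow_le_pow_iff_left₀ (norm_nonneg x) (by positivity) two_ne_zero).1 ?_
  rw [mul_pow, EuclideanSpace.real_norm_sq_eq, EuclideanSpace.real_norm_sq_eq, Finset.mul_sum]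
  refine Finset.sum_le_sum fun i _ => ?_
  rw [← sq_abs, ← sq_abs (y i), ← mul_pow]
  exact pow_le_pow_left₀ (abs_nonneg _) (h i) 2

theorem Real.sqrt_sum_sq_div_eq_norm_div {ι : Type*} [Fintype ι] (u : ι → ℝ) (c : ℝ) :
    √((∑ i, u i ^ 2) / c) = ‖WithLp.toLp 2 u‖ / √c := by
  rw [← EuclideanSpace.real_norm_sq_eq, Real.sqrt_div (by positivity), Real.sqrt_sq (norm_nonneg _)]

theorem Matrix.IsHermitian.norm_exp_mulVec_le {n : Type*} [Fintype n] [DecidableEq n]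
    {A : Matrix n n ℝ} (hA : A.IsHermitian) {V : Submodule ℝ (EuclideanSpace ℝ n)}
    (hV : ∀ v ∈ V, A.toEuclideanLin v ∈ V) {c : ℝ}
    (hc : ∀ v ∈ V, inner ℝ (A.toEuclideanLin v) v ≤ c * ‖v‖ ^ 2)
    {v : EuclideanSpace ℝ n} (hv : v ∈ V) :
    ‖(NormedSpace.exp A).toEuclideanLin v‖ ≤ Real.exp c * ‖v‖ := by
  have hT : (A.toEuclideanLin.restrict hV).IsSymmetric :=
    (isSymmetric_toEuclideanLin_iff.2 hA).restrict_invariant hV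
  set B := hT.eigenvectorBasis rfl
  set μ := hT.eigenvalues rfl
  have hAB (i) : A.toEuclideanLin (B i) = μ i • (B i : EuclideanSpace ℝ n) :=
    congrArg Subtype.val (hT.apply_eigenvectorBasis rfl i)
  have hμ (i) : μ i ≤ c := by
    have hBi : ‖(B i : EuclideanSpace ℝ n)‖ = 1 := B.orthonormal.1 i
    simpa [hAB, real_inner_smul_left, hBi] using hc _ (B i).2
  have hexpB (i) : (NormedSpace.exp A).toEuclideanLin (B i) =
      Real.exp (μ i) • (B i : EuclideanSpace ℝ n) :=
    congrArg (WithLp.toLp 2) (exp_mulVec_of_mulVec_eq_smul (congrArg WithLp.ofLp (hAB i)))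
  set w : V := ⟨v, hv⟩
  have hexp : (NormedSpace.exp A).toEuclideanLin v =
      B.repr.symm (WithLp.toLp 2 fun i => Real.exp (μ i) * B.repr w i) := by
    conv_lhs => rw [show v = w from rfl, ← B.sum_repr w]
    simp [← B.sum_repr_symm, hexpB, smul_smul, mul_comm]
  rw [hexp, Submodule.norm_coe, LinearIsometryEquiv.norm_map, show ‖v‖ = ‖w‖ from rfl,
    ← B.repr.norm_map w]
  refine EuclideanSpace.norm_le_mul_norm_of_abs_le (Real.exp_nonneg c) fun i => ?_
  simpa [abs_mul] using mul_le_mul_of_nonneg_right (Real.exp_le_exp.2 (hμ i)) (abs_nonneg _)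

section CayleyGraph

variable {G : Type*} [Group G] [Fintype G]

theorem transMatrix_mulVec_apply_s18 (S : Set G) (g : G → ℝ) (x : G) :
    (transMatrix S *ᵥ g) x = 𝔼 s ∈ S.toFinset, g (x * s) := by
  rw [expect_eq_sum_div_card, ← Set.ncard_eq_toFinset_card', div_eq_inv_mul, mul_sum,
    mulVec, dotProduct, ← Equiv.sum_comp (Equiv.mulLeft x)]
  simp [transMatrix, ite_mul, sum_ite, Set.filter_mem_univ_eq_toFinset]

theorem isHermitian_transMatrix {S : Set G} (hS : SymmSet S) : (transMatrix S).IsHermitian := by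
  ext x y
  simp only [conjTranspose_apply, transMatrix, star_trivial]
  rw [hS]
  simp

theorem sum_mulVec_transMatrix_coset_eq_zero (S : Set G) (H : Subgroup G) {g : G → ℝ}
    (hg : ∀ a, ∑ h : H, g (h * a) = 0) (a : G) :
    ∑ h : H, (transMatrix S *ᵥ g) (h * a) = 0 := by
  simp_rw [transMatrix_mulVec_apply_s18, mul_assoc]
  rw [← expect_sum_comm]
  exact expect_eq_zero fun s _ => hg (a * s)

def dirichletEnergy (S : Set G) (g : G → ℝ) : ℝ := ∑ x, ∑ s ∈ S.toFinset, (g x - g (x * s)) ^ 2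

theorem dirichletEnergy_nonneg (S : Set G) (g : G → ℝ) : 0 ≤ dirichletEnergy S g :=
  sum_nonneg fun _ _ => sum_nonneg fun _ _ => sq_nonneg _

theorem dirichletEnergy_eq (S : Set G) (g : G → ℝ) :
    dirichletEnergy S g = 2 * S.ncard * ∑ x, (g x - (transMatrix S *ᵥ g) x) * g x := by
  have hshift : ∑ x, ∑ s ∈ S.toFinset, g (x * s) ^ 2 = S.ncard * ∑ x, g x ^ 2 := by
    rw [sum_comm, Set.ncard_eq_toFinset_card', ← nsmul_eq_mul, ← sum_const]
    exact sum_congr rfl fun s _ => Equiv.sum_comp (Equiv.mulRight s) (g · ^ 2)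
  have hK (x : G) : S.ncard * (transMatrix S *ᵥ g) x = ∑ s ∈ S.toFinset, g (x * s) := by
    rw [transMatrix_mulVec_apply_s18, Set.ncard_eq_toFinset_card', card_mul_expect]
  unfold dirichletEnergy
  simp_rw [sub_sq, sum_add_distrib, sum_sub_distrib, hshift, sum_const,
    ← Set.ncard_eq_toFinset_card', nsmul_eq_mul, mul_assoc 2 (g _), ← mul_sum, ← hK]
  rw [mul_sum, mul_sum, ← sum_sub_distrib, ← sum_add_distrib]
  conv_rhs => rw [mul_sum]
  exact sum_congr rfl fun x _ => by ring

end CayleyGraph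

section Words

variable {G : Type*} [Group G] {S : Set G}

theorem exists_list_length_eq_wordLength (hS : SymmSet S) (hgen : Subgroup.closure S = ⊤)
    (γ : G) : ∃ l : List G, (∀ x ∈ l, x ∈ S) ∧ l.length = wordLength S γ ∧ l.prod = γ := by
  have hmem : γ ∈ Submonoid.closure (S ∪ S⁻¹) := by
    rw [← Subgroup.closure_toSubmonoid, hgen]; trivial
  obtain ⟨l, hl, hprod⟩ := Submonoid.exists_list_of_mem_closure hmem
  have hlS : ∀ x ∈ l, x ∈ S := fun x hx => (hl x hx).elim id (hS x).2
  exact Nat.sInf_mem (s := {n | ∃ l : List G, (∀ x ∈ l, x ∈ S) ∧ l.length = n ∧ l.prod = γ})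
    ⟨l.length, l, hlS, rfl, hprod⟩

theorem wordLength_le_setDiam {H : Set G} (hH : H.Finite) {γ : G} (hγ : γ ∈ H) :
    wordLength S γ ≤ setDiam S H :=
  le_csSup (hH.image _).bddAbove ⟨γ, hγ, rfl⟩

end Words

section Poincare

variable {G : Type*} [Group G] [Fintype G] {S : Set G}

theorem sum_sq_sub_mul_le_dirichletEnergy (g : G → ℝ) {s : G} (hs : s ∈ S) (c : G) :
    ∑ x, (g (x * c) - g (x * c * s)) ^ 2 ≤ dirichletEnergy S g := by
  calc ∑ x, (g (x * c) - g (x * c * s)) ^ 2 = ∑ x, (g x - g (x * s)) ^ 2 :=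
        Equiv.sum_comp (Equiv.mulRight c) fun x => (g x - g (x * s)) ^ 2
    _ ≤ dirichletEnergy S g := by
        rw [dirichletEnergy, sum_comm]
        exact single_le_sum (f := fun s => ∑ x, (g x - g (x * s)) ^ 2)
          (fun _ _ => by positivity) (Set.mem_toFinset.2 hs)

theorem sum_sq_sub_mul_list_prod_le (g : G → ℝ) {l : List G} (hl : ∀ s ∈ l, s ∈ S) :
    ∑ x, (g x - g (x * l.prod)) ^ 2 ≤ l.length ^ 2 * dirichletEnergy S g := by
  set d : ℕ → G → ℝ := fun i x => g (x * (l.take i).prod) - g (x * (l.take (i + 1)).prod)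
  have htelescope (x : G) : g x - g (x * l.prod) = ∑ i ∈ range l.length, d i x := by
    rw [sum_range_sub' (f := fun i => g (x * (l.take i).prod))]
    simp
  have hstep (i : ℕ) (hi : i ∈ range l.length) : ∑ x, d i x ^ 2 ≤ dirichletEnergy S g := by
    rw [mem_range] at hi
    simp only [d, List.prod_take_succ _ _ hi, ← mul_assoc]
    exact sum_sq_sub_mul_le_dirichletEnergy g (hl _ (l.getElem_mem hi)) _
  calc ∑ x, (g x - g (x * l.prod)) ^ 2
      ≤ ∑ x, l.length * ∑ i ∈ range l.length, d i x ^ 2 := sum_le_sum fun x _ => by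
        simpa [htelescope] using sq_sum_le_card_mul_sum_sq (s := range l.length) (f := (d · x))
    _ = l.length * ∑ i ∈ range l.length, ∑ x, d i x ^ 2 := by rw [← mul_sum, sum_comm]
    _ ≤ l.length * ∑ i ∈ range l.length, dirichletEnergy S g := by
        gcongr with i hi
        exact hstep i hi
    _ = l.length ^ 2 * dirichletEnergy S g := by simp [sq, mul_assoc]

theorem sum_sq_sub_mul_le_setDiam_sq_mul (hS : SymmSet S) (hgen : Subgroup.closure S = ⊤)
    (g : G → ℝ) {H : Set G} {γ : G} (hγ : γ ∈ H) :
    ∑ x, (g x - g (x * γ)) ^ 2 ≤ setDiam S H ^ 2 * dirichletEnergy S g := by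
  obtain ⟨l, hlS, hlen, rfl⟩ := exists_list_length_eq_wordLength hS hgen γ
  have hD : (l.length : ℝ) ≤ setDiam S H := by
    exact_mod_cast hlen ▸ wordLength_le_setDiam H.toFinite hγ
  calc _ ≤ l.length ^ 2 * dirichletEnergy S g := sum_sq_sub_mul_list_prod_le g hlS
    _ ≤ _ := mul_le_mul_of_nonneg_right (pow_le_pow_left₀ (by positivity) hD 2)
        (dirichletEnergy_nonneg S g)

theorem sum_sum_sq_sub_mul_eq (H : Subgroup G) [H.Normal] {g : G → ℝ}
    (hg : ∀ a, ∑ h : H, g (h * a) = 0) :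
    ∑ γ : H, ∑ x, (g x - g (x * γ)) ^ 2 = 2 * Fintype.card H * ∑ x, g x ^ 2 := by
  -- `γ ↦ x γ x⁻¹` permutes the normal subgroup `H`, turning `∑_γ g (x γ)` into a coset sum.
  have hright (x : G) : ∑ γ : H, g (x * γ) = 0 := by
    rw [← hg x]
    exact Fintype.sum_equiv (MulAut.conjNormal x).toEquiv _ _ fun γ => by
      simp [MulAut.conjNormal_apply]
  have hcross : ∑ γ : H, ∑ x, 2 * g x * g (x * γ) = 0 := by
    rw [sum_comm]
    simp [mul_assoc, ← mul_sum, hright]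
  have hshift (γ : H) : ∑ x, g (x * γ) ^ 2 = ∑ x, g x ^ 2 :=
    Equiv.sum_comp (Equiv.mulRight (γ : G)) (g · ^ 2)
  simp_rw [sub_sq, sum_add_distrib, sum_sub_distrib, hcross, hshift]
  simp only [sum_const, card_univ, nsmul_eq_mul, sub_zero]
  ring

theorem two_mul_sum_sq_le_setDiam_sq_mul (hS : SymmSet S) (hgen : Subgroup.closure S = ⊤)
    (H : Subgroup G) [H.Normal] {g : G → ℝ} (hg : ∀ a, ∑ h : H, g (h * a) = 0) :
    2 * ∑ x, g x ^ 2 ≤ setDiam S (H : Set G) ^ 2 * dirichletEnergy S g := by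
  have hcard : (0 : ℝ) < Fintype.card H := by exact_mod_cast Fintype.card_pos
  refine le_of_mul_le_mul_left ?_ hcard
  calc Fintype.card H * (2 * ∑ x, g x ^ 2) = ∑ γ : H, ∑ x, (g x - g (x * γ)) ^ 2 := by
        rw [sum_sum_sq_sub_mul_eq H hg]; ring
    _ ≤ ∑ _γ : H, setDiam S (H : Set G) ^ 2 * dirichletEnergy S g :=
        sum_le_sum fun γ _ => sum_sq_sub_mul_le_setDiam_sq_mul hS hgen g γ.2
    _ = _ := by simp

theorem sum_sq_le_mul_sum_sub_transMatrix_mulVec_mul (hS : SymmSet S)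
    (hgen : Subgroup.closure S = ⊤) (H : Subgroup G) [H.Normal] {g : G → ℝ}
    (hg : ∀ a, ∑ h : H, g (h * a) = 0) :
    ∑ x, g x ^ 2 ≤ S.ncard * setDiam S (H : Set G) ^ 2 *
      ∑ x, (g x - (transMatrix S *ᵥ g) x) * g x := by
  have := two_mul_sum_sq_le_setDiam_sq_mul hS hgen H hg
  rw [dirichletEnergy_eq] at this
  linarith

end Poincare

section HeatSemigroup

variable {G : Type*} [Group G] [Fintype G]

def cosetMeanZero (H : Subgroup G) : Submodule ℝ (EuclideanSpace ℝ G) where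
  carrier := {v | ∀ a, ∑ h : H, v (h * a) = 0}
  add_mem' {u v} hu hv a := by simp [sum_add_distrib, hu a, hv a]
  zero_mem' a := by simp
  smul_mem' c v hv a := by simp [← mul_sum, hv a]

theorem isHermitian_smul_transMatrix_sub_one {S : Set G} (hS : SymmSet S) (t : ℝ) :
    (t • (transMatrix S - 1)).IsHermitian :=
  ((isHermitian_transMatrix hS).sub isHermitian_one).smul (IsSelfAdjoint.all t)

theorem toEuclideanLin_smul_transMatrix_sub_one_mem (S : Set G) (H : Subgroup G) (t : ℝ)
    {v : EuclideanSpace ℝ G} (hv : v ∈ cosetMeanZero H) :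
    (t • (transMatrix S - 1)).toEuclideanLin v ∈ cosetMeanZero H := fun a => by
  have hK := sum_mulVec_transMatrix_coset_eq_zero S H hv a
  simp [toLpLin_apply, sum_sub_distrib, ← mul_sum, hK, hv a]

theorem inner_toEuclideanLin_smul_transMatrix_sub_one_le {S : Set G} (hS : SymmSet S)
    (hgen : Subgroup.closure S = ⊤) (H : Subgroup G) [H.Normal] {t : ℝ} (ht : 0 ≤ t)
    {v : EuclideanSpace ℝ G} (hv : v ∈ cosetMeanZero H) :
    inner ℝ ((t • (transMatrix S - 1)).toEuclideanLin v) v ≤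
      -t / (S.ncard * setDiam S (H : Set G) ^ 2) * ‖v‖ ^ 2 := by
  set X : ℝ := S.ncard * setDiam S (H : Set G) ^ 2
  set q := ∑ x, (v x - (transMatrix S *ᵥ v) x) * v x
  have hgap : ‖v‖ ^ 2 ≤ X * q := by
    rw [EuclideanSpace.real_norm_sq_eq]
    exact sum_sq_le_mul_sum_sub_transMatrix_mulVec_mul hS hgen H hv
  have hinner : inner ℝ ((t • (transMatrix S - 1)).toEuclideanLin v) v = -t * q := by
    simp only [q, PiLp.inner_apply, toLpLin_apply, sub_mulVec, smul_mulVec, one_mulVec,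
      Pi.smul_apply, Pi.sub_apply, smul_eq_mul, RCLike.inner_apply, Real.ringHom_apply, mul_sum]
    exact sum_congr rfl fun x _ => by ring
  rw [hinner]
  -- If `X = 0` then `-t / X = 0`, but the Poincaré inequality `hgap` then forces `v = 0`.
  rcases (show 0 ≤ X by positivity).eq_or_lt with hX | hX
  · obtain rfl : v = 0 := norm_eq_zero.1 <| (pow_eq_zero_iff two_ne_zero).1 <|
      le_antisymm (by simpa [← hX] using hgap) (by positivity)
    simp [q]
  · calc -t * q ≤ -t * (‖v‖ ^ 2 / X) :=
          mul_le_mul_of_nonpos_left ((div_le_iff₀ hX).2 (by linarith)) (by linarith)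
      _ = -t / X * ‖v‖ ^ 2 := by ring

end HeatSemigroup

/-- inequality `loc_mix`: if `f` sums to zero on every coset of `G₂`, then
`‖P_t f‖₂ ≤ ‖f‖₂ · exp(-t/(|S|·Diam_S(G₂)²))`. -/
theorem heat_kernel_contraction_on_coset_mean_zero (G : Type*) [Group G] [Fintype G]
    (S : Set G) (hS : SymmSet S) (hgen : Subgroup.closure S = ⊤)
    (f : G → ℝ) (hf : ∀ g : G, (∑ h : ↥(commutator G), f ((h : G) * g)) = 0)
    (t : ℝ) (ht : 0 ≤ t) :
    Real.sqrt ((∑ x : G, (∑ y : G, heatKernel S t x y * f y) ^ 2) / (Fintype.card G : ℝ)) ≤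
      Real.sqrt ((∑ x : G, (f x) ^ 2) / (Fintype.card G : ℝ)) *
        Real.exp (-t / ((S.ncard : ℝ) * (setDiam S (commutator G : Set G) : ℝ) ^ 2)) := by
  have hfV : WithLp.toLp 2 f ∈ cosetMeanZero (commutator G) := hf
  have hcontract := (isHermitian_smul_transMatrix_sub_one hS t).norm_exp_mulVec_le
    (fun v hv => toEuclideanLin_smul_transMatrix_sub_one_mem S _ t hv)
    (fun v hv => inner_toEuclideanLin_smul_transMatrix_sub_one_le hS hgen _ ht hv) hfV
  rw [Real.sqrt_sum_sq_div_eq_norm_div, Real.sqrt_sum_sq_div_eq_norm_div, div_mul_eq_mul_div]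
  gcongr
  exact hcontract.trans_eq (mul_comm _ _)

end
end
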